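/- arXiv:1204.2435 — 8 statements merged into one kernel-verified Lean document; each statement's English description precedes it below -/
import Mathlib

section
/- For every α ∈ [0, M) there exists exactly one z ∈ [0,∞) with f(z) = α; that is, the inverse function f⁻¹ : [0, M) → [0,∞) is well-defined. -/
open Finset Filter Real Topology

/-- The local weight enumerating polynomial `A_t(z) = 1 + ∑_{u=r_t}^{s_t} a_{t,u} z^u`,
encoded with a full coefficient function `a` satisfying `a t 0 = 1`, `a t u = 0` for
`0 < u < r t` and for `u > s t`. -/
noncomputable def Afun {ι : Type*} (s : ι → ℕ) (a : ι → ℕ → ℝ) (t : ι) (z : ℝ) : ℝ :=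
  ∑ u ∈ Finset.range (s t + 1), a t u * z ^ u

/-- The function `f(z) = c ⬝ ∑_{t ∈ I_c} γ_t z A_t′(z) / A_t(z)`. -/
noncomputable def ff {ι : Type*} [Fintype ι] (s : ι → ℕ) (a : ι → ℕ → ℝ)
    (γ : ι → ℝ) (c : ℝ) (z : ℝ) : ℝ :=
  c * ∑ t, γ t * (z * deriv (Afun s a t) z) / Afun s a t z

/-!
Write `A(z) = ∑ b_u z^u` for one of the polynomials and `N(z) = z A'(z) = ∑ u b_u z^u`.
Symmetrising the double sum gives
`2 (N(y) A(x) - N(x) A(y)) = ∑_{u,v} b_u b_v (u - v) (y^u x^v - x^u y^v)`,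
and for `0 ≤ x ≤ y` every summand is nonnegative, so `N / A` is nondecreasing on `[0, ∞)`,
strictly as soon as some `b_u` with `u ≥ 1` is positive (the summand with `v = 0`).
Moreover `N / A` vanishes at `0` and tends to the degree `ū` of `A` at infinity.
Hence `f` is continuous and strictly increasing on `[0, ∞)`, with `f(0) = 0` and `f → M`,
and the intermediate value theorem gives the unique preimage of each `α ∈ [0, M)`.
-/

section EulerRatio

variable {n m : ℕ} {b : ℕ → ℝ}

noncomputable def polySum (n : ℕ) (b : ℕ → ℝ) (z : ℝ) : ℝ :=
  ∑ u ∈ range (n + 1), b u * z ^ u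

noncomputable def eulerSum (n : ℕ) (b : ℕ → ℝ) : ℝ → ℝ :=
  polySum n fun u => u * b u

noncomputable def eulerRatio (n : ℕ) (b : ℕ → ℝ) (z : ℝ) : ℝ :=
  eulerSum n b z / polySum n b z

lemma continuous_polySum (n : ℕ) (b : ℕ → ℝ) : Continuous (polySum n b) :=
  continuous_finsetSum _ fun u _ => continuous_const.mul (continuous_pow u)

lemma hasDerivAt_polySum (n : ℕ) (b : ℕ → ℝ) (z : ℝ) :
    HasDerivAt (polySum n b) (∑ u ∈ range (n + 1), b u * (u * z ^ (u - 1))) z :=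
  HasDerivAt.fun_sum fun u _ => (hasDerivAt_pow u z).const_mul (b u)

lemma mul_deriv_polySum (n : ℕ) (b : ℕ → ℝ) (z : ℝ) :
    z * deriv (polySum n b) z = eulerSum n b z := by
  rw [(hasDerivAt_polySum n b z).deriv, Finset.mul_sum]
  refine Finset.sum_congr rfl fun u _ => ?_
  rcases u with _ | u
  · simp
  · rw [Nat.add_sub_cancel, pow_succ]
    ring

lemma polySum_pos (hb : ∀ u, 0 ≤ b u) (hb0 : 0 < b 0) {z : ℝ} (hz : 0 ≤ z) :
    0 < polySum n b z :=
  calc 0 < b 0 * z ^ 0 := by simpa using hb0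
    _ ≤ polySum n b z :=
      single_le_sum (fun u _ => mul_nonneg (hb u) (pow_nonneg hz u)) (by simp)

lemma eulerRatio_zero : eulerRatio n b 0 = 0 := by
  simp [eulerRatio, eulerSum, polySum, sum_range_succ']

lemma continuousOn_eulerRatio (hb : ∀ u, 0 ≤ b u) (hb0 : 0 < b 0) :
    ContinuousOn (eulerRatio n b) (Set.Ici 0) :=
  (continuous_polySum _ _).continuousOn.div (continuous_polySum _ _).continuousOn
    fun _ hz => (polySum_pos hb hb0 hz).ne'

lemma two_mul_eulerSum_mul_polySum_sub (x y : ℝ) :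
    2 * (eulerSum n b y * polySum n b x - eulerSum n b x * polySum n b y) =
      ∑ u ∈ range (n + 1), ∑ v ∈ range (n + 1),
        b u * b v * (((u : ℝ) - v) * (y ^ u * x ^ v - x ^ u * y ^ v)) := by
  set G : ℕ → ℕ → ℝ := fun u v => b u * b v * u * (y ^ u * x ^ v - x ^ u * y ^ v)
  have hG : eulerSum n b y * polySum n b x - eulerSum n b x * polySum n b y =
      ∑ u ∈ range (n + 1), ∑ v ∈ range (n + 1), G u v := by
    simp only [eulerSum, polySum, sum_mul_sum, ← sum_sub_distrib]
    exact sum_congr rfl fun u _ => sum_congr rfl fun v _ => by ring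
  rw [hG, two_mul]
  nth_rewrite 2 [sum_comm]
  simp only [← sum_add_distrib]
  exact sum_congr rfl fun u _ => sum_congr rfl fun v _ => by ring

lemma pow_mul_pow_sub_pow_mul_pow_nonneg {x y : ℝ} (hx : 0 ≤ x) (hxy : x ≤ y) {u v : ℕ}
    (hvu : v ≤ u) : 0 ≤ y ^ u * x ^ v - x ^ u * y ^ v := by
  obtain ⟨k, rfl⟩ := Nat.exists_eq_add_of_le hvu
  have hfactor : y ^ (v + k) * x ^ v - x ^ (v + k) * y ^ v = (x * y) ^ v * (y ^ k - x ^ k) := by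
    ring
  rw [hfactor]
  exact mul_nonneg (pow_nonneg (mul_nonneg hx (hx.trans hxy)) v)
    (sub_nonneg.2 (pow_le_pow_left₀ hx hxy k))

lemma sub_mul_pow_mul_pow_sub_nonneg {x y : ℝ} (hx : 0 ≤ x) (hxy : x ≤ y) (u v : ℕ) :
    0 ≤ ((u : ℝ) - v) * (y ^ u * x ^ v - x ^ u * y ^ v) := by
  rcases le_total v u with h | h
  · exact mul_nonneg (sub_nonneg.2 (Nat.cast_le.2 h)) (pow_mul_pow_sub_pow_mul_pow_nonneg hx hxy h)
  · refine mul_nonneg_of_nonpos_of_nonpos (sub_nonpos.2 (Nat.cast_le.2 h)) ?_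
    linarith [pow_mul_pow_sub_pow_mul_pow_nonneg hx hxy h]

lemma eulerSum_mul_polySum_le (hb : ∀ u, 0 ≤ b u) {x y : ℝ} (hx : 0 ≤ x) (hxy : x ≤ y) :
    eulerSum n b x * polySum n b y ≤ eulerSum n b y * polySum n b x := by
  have hnonneg : 0 ≤ 2 * (eulerSum n b y * polySum n b x - eulerSum n b x * polySum n b y) := by
    rw [two_mul_eulerSum_mul_polySum_sub]
    exact sum_nonneg fun u _ => sum_nonneg fun v _ =>
      mul_nonneg (mul_nonneg (hb u) (hb v)) (sub_mul_pow_mul_pow_sub_nonneg hx hxy u v)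
  linarith

lemma eulerSum_mul_polySum_lt (hb : ∀ u, 0 ≤ b u) (hb0 : 0 < b 0) (hm : 0 < b m)
    (hm1 : 1 ≤ m) (hmn : m ≤ n) {x y : ℝ} (hx : 0 ≤ x) (hxy : x < y) :
    eulerSum n b x * polySum n b y < eulerSum n b y * polySum n b x := by
  have hnonneg : ∀ u v, 0 ≤ b u * b v * (((u : ℝ) - v) * (y ^ u * x ^ v - x ^ u * y ^ v)) :=
    fun u v => mul_nonneg (mul_nonneg (hb u) (hb v)) (sub_mul_pow_mul_pow_sub_nonneg hx hxy.le u v)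
  -- the summand `(u, v) = (m, 0)` is `b_m b_0 m (y^m - x^m) > 0`
  have hmem : ∀ {u}, u ≤ n → u ∈ range (n + 1) := fun h => mem_range.2 (Nat.lt_succ_of_le h)
  have hpos : 0 < 2 * (eulerSum n b y * polySum n b x - eulerSum n b x * polySum n b y) := by
    rw [two_mul_eulerSum_mul_polySum_sub]
    refine sum_pos' (fun u _ => sum_nonneg fun v _ => hnonneg u v) ⟨m, hmem hmn, ?_⟩
    refine sum_pos' (fun v _ => hnonneg m v) ⟨0, hmem (Nat.zero_le n), ?_⟩
    have hpow : x ^ m < y ^ m := pow_lt_pow_left₀ hxy hx (by omega)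
    have hm0 : (0 : ℝ) < m := by exact_mod_cast hm1
    simpa using mul_pos (mul_pos hm hb0) (mul_pos hm0 (sub_pos.2 hpow))
  linarith

lemma eulerRatio_monotoneOn (hb : ∀ u, 0 ≤ b u) (hb0 : 0 < b 0) :
    MonotoneOn (eulerRatio n b) (Set.Ici 0) := fun _ hx _ hy hxy =>
  (div_le_div_iff₀ (polySum_pos hb hb0 hx) (polySum_pos hb hb0 hy)).2
    (eulerSum_mul_polySum_le hb hx hxy)

lemma eulerRatio_lt_eulerRatio (hb : ∀ u, 0 ≤ b u) (hb0 : 0 < b 0) (hm : 0 < b m)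
    (hm1 : 1 ≤ m) (hmn : m ≤ n) {x y : ℝ} (hx : 0 ≤ x) (hxy : x < y) :
    eulerRatio n b x < eulerRatio n b y :=
  (div_lt_div_iff₀ (polySum_pos hb hb0 hx) (polySum_pos hb hb0 (hx.trans hxy.le))).2
    (eulerSum_mul_polySum_lt hb hb0 hm hm1 hmn hx hxy)

lemma tendsto_polySum_div_pow_atTop (hb : ∀ u, m < u → b u = 0) (hmn : m ≤ n) :
    Tendsto (fun z => polySum n b z / z ^ m) atTop (𝓝 (b m)) := by
  have hterm : ∀ u ∈ range (n + 1),
      Tendsto (fun z : ℝ => b u * z ^ u / z ^ m) atTop (𝓝 (if u = m then b m else 0)) := by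
    intro u _
    rcases lt_trichotomy u m with h | rfl | h
    · have hinv : Tendsto (fun z : ℝ => b u * (z ^ (m - u))⁻¹) atTop (𝓝 (b u * 0)) :=
        ((tendsto_inv_atTop_zero.comp (tendsto_pow_atTop (by omega))).const_mul _)
      rw [if_neg h.ne, ← mul_zero (b u)]
      refine hinv.congr' ?_
      filter_upwards [eventually_gt_atTop 0] with z hz
      rw [pow_sub₀ z hz.ne' h.le]
      field_simp
    · rw [if_pos rfl]
      refine tendsto_const_nhds.congr' ?_
      filter_upwards [eventually_gt_atTop 0] with z hz
      rw [mul_div_assoc, div_self (pow_pos hz u).ne', mul_one]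
    · simp [hb u h, h.ne']
  have hsum := tendsto_finsetSum _ hterm
  rw [sum_ite_eq', if_pos (mem_range.2 (Nat.lt_succ_of_le hmn))] at hsum
  simpa only [polySum, sum_div] using hsum

lemma tendsto_eulerRatio_atTop (hm : b m ≠ 0) (hb : ∀ u, m < u → b u = 0) (hmn : m ≤ n) :
    Tendsto (eulerRatio n b) atTop (𝓝 m) := by
  have hN : Tendsto (fun z => eulerSum n b z / z ^ m) atTop (𝓝 (m * b m)) :=
    tendsto_polySum_div_pow_atTop (fun u hu => by simp [hb u hu]) hmn
  have hlim := hN.div (tendsto_polySum_div_pow_atTop hb hmn) hm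
  rw [mul_div_cancel_right₀ _ hm] at hlim
  refine hlim.congr' ?_
  filter_upwards [eventually_gt_atTop 0] with z hz
  exact div_div_div_cancel_right₀ (pow_pos hz m).ne' _ _

end EulerRatio

lemma existsUnique_eq_of_strictMonoOn_Ici {f : ℝ → ℝ} {x₀ α L : ℝ}
    (hmono : StrictMonoOn f (Set.Ici x₀)) (hcont : ContinuousOn f (Set.Ici x₀))
    (hlim : Tendsto f atTop (𝓝 L)) (hα₀ : f x₀ ≤ α) (hαL : α < L) :
    ∃! z, x₀ ≤ z ∧ f z = α := by
  obtain ⟨Z, hαZ, hZ⟩ := ((hlim.eventually (lt_mem_nhds hαL)).and (eventually_ge_atTop x₀)).exists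
  obtain ⟨z, hz, hfz⟩ :=
    intermediate_value_Icc hZ (hcont.mono Set.Icc_subset_Ici_self) ⟨hα₀, hαZ.le⟩
  exact ⟨z, ⟨hz.1, hfz⟩, fun y hy => hmono.injOn hy.1 hz.1 (hy.2.trans hfz.symm)⟩

lemma Afun_eq_polySum {ι : Type*} (s : ι → ℕ) (a : ι → ℕ → ℝ) (t : ι) :
    Afun s a t = polySum (s t) (a t) :=
  rfl

section WeightedSum

variable {ι : Type*} [Fintype ι] {s : ι → ℕ} {a : ι → ℕ → ℝ} {γ : ι → ℝ} {c : ℝ}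

lemma ff_eq : ff s a γ c = fun z => c * ∑ t, γ t * eulerRatio (s t) (a t) z := by
  ext z
  simp only [ff, eulerRatio, Afun_eq_polySum, mul_deriv_polySum, mul_div_assoc]

lemma ff_zero : ff s a γ c 0 = 0 := by
  simp [ff_eq, eulerRatio_zero]

lemma continuousOn_ff (hnn : ∀ t u, 0 ≤ a t u) (ha0 : ∀ t, 0 < a t 0) :
    ContinuousOn (ff s a γ c) (Set.Ici 0) := by
  rw [ff_eq]
  exact continuousOn_const.mul <| continuousOn_finsetSum _ fun t _ =>
    continuousOn_const.mul (continuousOn_eulerRatio (hnn t) (ha0 t))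

lemma strictMonoOn_ff (hnn : ∀ t u, 0 ≤ a t u) (ha0 : ∀ t, 0 < a t 0) (hγ : ∀ t, 0 < γ t)
    (hc : 0 < c) {t₀ : ι} {m : ℕ} (hm : 0 < a t₀ m) (hm1 : 1 ≤ m) (hmn : m ≤ s t₀) :
    StrictMonoOn (ff s a γ c) (Set.Ici 0) := by
  intro x hx y hy hxy
  rw [ff_eq]
  refine mul_lt_mul_of_pos_left (sum_lt_sum (fun t _ => ?_) ⟨t₀, mem_univ _, ?_⟩) hc
  · exact mul_le_mul_of_nonneg_left
      (eulerRatio_monotoneOn (hnn t) (ha0 t) hx hy hxy.le) (hγ t).le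
  · exact mul_lt_mul_of_pos_left
      (eulerRatio_lt_eulerRatio (hnn t₀) (ha0 t₀) hm hm1 hmn hx hxy) (hγ t₀)

lemma tendsto_ff_atTop {ubar : ι → ℕ} (hubar : ∀ t, a t (ubar t) ≠ 0)
    (hvanish : ∀ t u, ubar t < u → a t u = 0) (hle : ∀ t, ubar t ≤ s t) :
    Tendsto (ff s a γ c) atTop (𝓝 (c * ∑ t, γ t * (ubar t : ℝ))) := by
  rw [ff_eq]
  exact tendsto_const_nhds.mul <| tendsto_finsetSum _ fun t _ =>
    tendsto_const_nhds.mul (tendsto_eulerRatio_atTop (hubar t) (hvanish t) (hle t))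

end WeightedSum

theorem stmt_4_general {ι : Type*} [Fintype ι]
    (s : ι → ℕ)
    (a : ι → ℕ → ℝ)
    (ha0 : ∀ t, a t 0 = 1)
    (hhigh : ∀ t u, s t < u → a t u = 0)
    (hnn : ∀ t u, 0 ≤ a t u)
    (ubar : ι → ℕ)
    (hubar : ∀ t, 0 < a t (ubar t) ∧ ∀ u, a t u ≠ 0 → u ≤ ubar t)
    (γ : ι → ℝ) (hγ : ∀ t, 0 < γ t) (c : ℝ) (hc : 0 < c) :
    ∀ α : ℝ, 0 ≤ α → α < c * ∑ t, γ t * (ubar t : ℝ) →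
      ∃! z : ℝ, 0 ≤ z ∧ ff s a γ c z = α := by
  intro α hα hαM
  have ha0' : ∀ t, 0 < a t 0 := fun t => (ha0 t).symm ▸ one_pos
  have hvanish : ∀ t u, ubar t < u → a t u = 0 := fun t u hu => by
    by_contra h
    exact absurd ((hubar t).2 u h) (not_le.2 hu)
  have hle : ∀ t, ubar t ≤ s t := fun t => by
    by_contra h
    exact (hubar t).1.ne' (hhigh t _ (not_le.1 h))
  -- `M > 0` forces some `ū_t ≥ 1`, which makes `f` strictly increasing
  obtain ⟨t₀, ht₀⟩ : ∃ t, 1 ≤ ubar t := by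
    by_contra! h
    simp [Nat.lt_one_iff.1 (h _)] at hαM
    linarith
  exact existsUnique_eq_of_strictMonoOn_Ici
    (strictMonoOn_ff hnn ha0' hγ hc (hubar t₀).1 ht₀ (hle t₀))
    (continuousOn_ff hnn ha0') (tendsto_ff_atTop (fun t => (hubar t).1.ne') hvanish hle)
    (ff_zero.trans_le hα) hαM

/-- for every `α ∈ [0, M)` there is exactly one `z ∈ [0,∞)` with `f(z) = α`;
that is, `f⁻¹ : [0,M) → [0,∞)` is well-defined.  Here `M = c ⬝ ∑_t γ_t ū_t`. -/
theorem stmt_4 {ι : Type*} [Fintype ι] [Nonempty ι]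
    (r s : ι → ℕ) (h2r : ∀ t, 2 ≤ r t) (hrs : ∀ t, r t ≤ s t)
    (a : ι → ℕ → ℝ)
    (ha0 : ∀ t, a t 0 = 1)
    (hmid : ∀ t u, 0 < u → u < r t → a t u = 0)
    (hhigh : ∀ t u, s t < u → a t u = 0)
    (hnn : ∀ t u, 0 ≤ a t u)
    (har : ∀ t, 0 < a t (r t))
    (ubar : ι → ℕ)
    (hubar : ∀ t, 0 < a t (ubar t) ∧ ∀ u, a t u ≠ 0 → u ≤ ubar t)
    (γ : ι → ℝ) (hγ : ∀ t, 0 < γ t) (c : ℝ) (hc : 0 < c) :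
    ∀ α : ℝ, 0 ≤ α → α < c * ∑ t, γ t * (ubar t : ℝ) →
      ∃! z : ℝ, 0 ≤ z ∧ ff s a γ c z = α :=
  stmt_4_general s a ha0 hhigh hnn ubar hubar γ hγ c hc
end

section
/- Let s ≥ 1 and let C ⊆ F₂^s be a binary linear code with dual minimum distance greater than one. Then the weight distribution of C is symmetric if and only if the all-ones vector (1,1,…,1) belongs to C. (Equivalently, the weight distribution is symmetric if and only if ū = s.) -/
/-!
Adding the all-ones vector `1` sends weight `w` to `s - w`, so if `1 ∈ C` the weight distribution
is symmetric about `s`, which is then the maximal weight. Conversely, when no coordinate vanishes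
on all of `C`, each coordinate is nonzero on exactly half of the codewords, so the average weight
is `s / 2`; a distribution symmetric about `ū` has average weight `ū / 2`, whence `ū = s`, and the
only vector of weight `s` is `1`.
-/

open Finset

theorem Finset.two_mul_sum_eq_mul_card_of_symmetric {α : Type*} {K : Finset α} {w : α → ℕ}
    {m : ℕ} (hw : ∀ a ∈ K, w a ≤ m)
    (hsym : ∀ u ≤ m, #{a ∈ K | w a = m - u} = #{a ∈ K | w a = u}) :
    2 * ∑ a ∈ K, w a = m * #K := by
  have hmaps : ∀ a ∈ K, w a ∈ range (m + 1) := fun a ha => mem_range_succ_iff.2 (hw a ha)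
  have fiberwise (f : ℕ → ℕ) :
      ∑ a ∈ K, f (w a) = ∑ u ∈ range (m + 1), #{a ∈ K | w a = u} * f u := by
    simp_rw [← sum_fiberwise_of_maps_to' hmaps f, sum_const, smul_eq_mul]
  have hreflect : ∑ a ∈ K, (m - w a) = ∑ a ∈ K, w a :=
    calc ∑ a ∈ K, (m - w a) = ∑ u ∈ range (m + 1), #{a ∈ K | w a = u} * (m - u) := fiberwise _
      _ = ∑ u ∈ range (m + 1), #{a ∈ K | w a = u} * u := by
          rw [← sum_range_reflect]
          refine sum_congr rfl fun u hu => ?_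
          have hu : u ≤ m := mem_range_succ_iff.1 hu
          rw [Nat.add_sub_cancel, hsym u hu, Nat.sub_sub_self hu]
      _ = ∑ a ∈ K, w a := (fiberwise id).symm
  calc 2 * ∑ a ∈ K, w a = ∑ a ∈ K, (w a + (m - w a)) := by
        rw [sum_add_distrib, hreflect, two_mul]
    _ = m * #K := by
        rw [sum_congr rfl fun a ha => Nat.add_sub_cancel' (hw a ha), sum_const, smul_eq_mul,
          mul_comm]

section BinaryVectors

variable {ι : Type*}

theorem add_add_cancel_right_zmod_two (c d : ι → ZMod 2) : c + d + d = c :=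
  funext fun i => CharTwo.add_cancel_right (c i) (d i)

theorem two_mul_card_filter_apply_ne_zero {K : Finset (ι → ZMod 2)} {c₀ : ι → ZMod 2}
    (hK : ∀ c ∈ K, c + c₀ ∈ K) {i : ι} (hi : c₀ i ≠ 0) :
    2 * #{c ∈ K | c i ≠ 0} = #K := by
  have hflip : ∀ a b : ZMod 2, b ≠ 0 → (a + b = 0 ↔ a ≠ 0) := by decide
  have hhalf : #{c ∈ K | c i ≠ 0} = #{c ∈ K | ¬ c i ≠ 0} := by
    apply card_nbij' (· + c₀) (· + c₀) <;> intro c <;>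
      simp +contextual [hK, hi, hflip _ _ hi, add_add_cancel_right_zmod_two]
  rw [two_mul]
  nth_rw 2 [hhalf]
  exact card_filter_add_card_filter_not _

variable [Fintype ι]

theorem hammingNorm_add_one (c : ι → ZMod 2) :
    hammingNorm (c + 1) + hammingNorm c = Fintype.card ι := by
  have hflip : ∀ a : ZMod 2, a + 1 ≠ 0 ↔ ¬ a ≠ 0 := by decide
  simp only [hammingNorm, Pi.add_apply, Pi.one_apply, hflip]
  rw [add_comm, card_filter_add_card_filter_not, card_univ]

theorem eq_one_of_hammingNorm_eq_card {c : ι → ZMod 2} (hc : hammingNorm c = Fintype.card ι) :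
    c = 1 := by
  have hzero : hammingNorm (c + 1) = 0 := by have := hammingNorm_add_one c; omega
  rw [hammingNorm_eq_zero] at hzero
  rw [eq_neg_of_add_eq_zero_left hzero]
  funext i
  exact CharTwo.neg_eq (1 : ZMod 2)

theorem two_mul_sum_hammingNorm {K : Finset (ι → ZMod 2)}
    (hK : ∀ i, ∃ c₀, c₀ i ≠ 0 ∧ ∀ c ∈ K, c + c₀ ∈ K) :
    2 * ∑ c ∈ K, hammingNorm c = Fintype.card ι * #K := by
  have hswap : ∑ c ∈ K, hammingNorm c = ∑ i, #{c ∈ K | c i ≠ 0} := by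
    simp only [hammingNorm, card_filter]
    exact sum_comm
  rw [hswap, mul_sum, sum_congr rfl fun i _ => ?_, sum_const, card_univ, smul_eq_mul]
  obtain ⟨c₀, hi, hc₀⟩ := hK i
  exact two_mul_card_filter_apply_ne_zero hc₀ hi

theorem card_filter_hammingNorm_card_sub_eq {K : Finset (ι → ZMod 2)}
    (hK : ∀ c ∈ K, c + 1 ∈ K) {u : ℕ} (hu : u ≤ Fintype.card ι) :
    #{c ∈ K | hammingNorm c = Fintype.card ι - u} = #{c ∈ K | hammingNorm c = u} := by
  apply card_nbij' (· + 1) (· + 1)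
  all_goals
    intro c
    simp only [coe_filter, Set.mem_ofPred_eq]
  · rintro ⟨hc, hw⟩; exact ⟨hK c hc, by have := hammingNorm_add_one c; omega⟩
  · rintro ⟨hc, hw⟩; exact ⟨hK c hc, by have := hammingNorm_add_one c; omega⟩
  · exact fun _ => add_add_cancel_right_zmod_two c 1
  · exact fun _ => add_add_cancel_right_zmod_two c 1

theorem eq_card_of_weight_distribution_symmetric {K : Finset (ι → ZMod 2)} (hK_ne : K.Nonempty)
    (hK : ∀ i, ∃ c₀, c₀ i ≠ 0 ∧ ∀ c ∈ K, c + c₀ ∈ K) {m : ℕ} (hw : ∀ c ∈ K, hammingNorm c ≤ m)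
    (hsym : ∀ u ≤ m, #{c ∈ K | hammingNorm c = m - u} = #{c ∈ K | hammingNorm c = u}) :
    m = Fintype.card ι :=
  Nat.eq_of_mul_eq_mul_right hK_ne.card_pos <|
    (two_mul_sum_eq_mul_card_of_symmetric hw hsym).symm.trans (two_mul_sum_hammingNorm hK)

end BinaryVectors

theorem stmt_5_general (s : ℕ) (C : Submodule (ZMod 2) (Fin s → ZMod 2))
    (hdual : ∀ i : Fin s, ∃ c ∈ C, c i ≠ 0)
    (ubar : ℕ)
    (hubar_mem : ∃ c ∈ C, hammingNorm c = ubar)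
    (hubar_max : ∀ c ∈ C, hammingNorm c ≤ ubar) :
    ((∀ u ≤ ubar,
        {c : Fin s → ZMod 2 | c ∈ C ∧ hammingNorm c = ubar - u}.ncard
          = {c : Fin s → ZMod 2 | c ∈ C ∧ hammingNorm c = u}.ncard)
      ↔ (fun _ => (1 : ZMod 2)) ∈ C) ∧
    ((∀ u ≤ ubar,
        {c : Fin s → ZMod 2 | c ∈ C ∧ hammingNorm c = ubar - u}.ncard
          = {c : Fin s → ZMod 2 | c ∈ C ∧ hammingNorm c = u}.ncard)
      ↔ ubar = s) := by
  classical
  set K : Finset (Fin s → ZMod 2) := {c | c ∈ C}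
  have hK (d) (hd : d ∈ C) (c) (hc : c ∈ K) : c + d ∈ K := by
    simpa [K] using C.add_mem (by simpa [K] using hc) hd
  have hncard (u : ℕ) : {c : Fin s → ZMod 2 | c ∈ C ∧ hammingNorm c = u}.ncard
      = #{c ∈ K | hammingNorm c = u} := by
    rw [← Set.ncard_coe_finset]
    congr
    ext
    simp [K, and_comm]
  simp only [hncard]
  have hone_iff : (fun _ => (1 : ZMod 2)) ∈ C ↔ ubar = s := by
    obtain ⟨c, hc, rfl⟩ := hubar_mem
    refine ⟨fun h => le_antisymm ?_ ?_, fun h => ?_⟩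
    · simpa using hammingNorm_le_card_fintype (x := c)
    · simpa [hammingNorm] using hubar_max _ h
    · rwa [eq_one_of_hammingNorm_eq_card (c := c) (by simpa using h)] at hc
  have hsym_iff : (∀ u ≤ ubar, #{c ∈ K | hammingNorm c = ubar - u} = #{c ∈ K | hammingNorm c = u})
      ↔ ubar = s := by
    refine ⟨fun hsym => ?_, fun h u hu => ?_⟩
    · simpa using eq_card_of_weight_distribution_symmetric ⟨0, by simp [K]⟩
        (fun i => (hdual i).imp fun c₀ ⟨hc₀, hi⟩ => ⟨hi, hK c₀ hc₀⟩)
        (fun c hc => hubar_max c (by simpa [K] using hc)) hsym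
    · subst h
      simpa using card_filter_hammingNorm_card_sub_eq (hK 1 (hone_iff.2 rfl)) (by simpa using hu)
  exact ⟨hsym_iff.trans hone_iff.symm, hsym_iff⟩

/-- for a binary linear code `C ⊆ F₂^s` (`s ≥ 1`) whose dual minimum distance is
greater than one, the weight distribution `A_u = |{c ∈ C : w(c) = u}|` is symmetric
(`A_{ū−u} = A_u` for all `0 ≤ u ≤ ū`, where `ū` is the maximal codeword weight) if and only if
the all-ones vector belongs to `C`; equivalently, if and only if `ū = s`. -/
theorem stmt_5 (s : ℕ) (hs : 1 ≤ s)
    (C : Submodule (ZMod 2) (Fin s → ZMod 2))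
    (hdual : ∀ i : Fin s, ∃ c ∈ C, c i ≠ 0)
    (ubar : ℕ)
    (hubar_mem : ∃ c ∈ C, hammingNorm c = ubar)
    (hubar_max : ∀ c ∈ C, hammingNorm c ≤ ubar) :
    ((∀ u ≤ ubar,
        {c : Fin s → ZMod 2 | c ∈ C ∧ hammingNorm c = ubar - u}.ncard
          = {c : Fin s → ZMod 2 | c ∈ C ∧ hammingNorm c = u}.ncard)
      ↔ (fun _ => (1 : ZMod 2)) ∈ C) ∧
    ((∀ u ≤ ubar,
        {c : Fin s → ZMod 2 | c ∈ C ∧ hammingNorm c = ubar - u}.ncard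
          = {c : Fin s → ZMod 2 | c ∈ C ∧ hammingNorm c = u}.ncard)
      ↔ ubar = s) :=
  stmt_5_general s C hdual ubar hubar_mem hubar_max
end

section
/- Let z > 0 and set α = f(z) (so 0 < α < M ≤ 1). Define β = qα, y₀ = α/((1−α)z) and x₀ = (α/(1−α))^{1−q} · z^q. Then: (i) x₀y₀^q/(1 + x₀y₀^q) = α = β/q; (ii) z·y₀/(1 + z·y₀) = β/q; (iii) c Σ_{t∈I_c} γ_t z A_t′(z)/A_t(z) = β/q; and (iv) log(1 + x₀y₀^q) − α log x₀ + q c Σ_{t∈I_c} γ_t log A_t(z) + q log(1 − β/q) = (1−q)·h(α) − qα·log z + q c Σ_{t∈I_c} γ_t log A_t(z). Hence, for a GLDPC ensemble whose VNs are all length-q repetition codes (so each VN has IO-WEF B(x,y) = 1 + x y^q and ∫λ = 1/q), the growth-rate formula of Theorem 1 evaluates to G(α) = (1−q)h(α) − qα log f⁻¹(α) + q c Σ_{t∈I_c} γ_t log A_t(f⁻¹(α)). -/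
/-!
Write `w = α / (1 - α)` for the odds of `α`. Then `x₀ y₀ ^ q = z y₀ = w`, so both ratios in (i)
and (ii) equal `w / (1 + w) = α`, and (iv) is an expansion of logarithms. The bounds
`0 < α < M` hold because `z A_t'(z) / A_t(z)` is the average of the degrees `u` weighted by
`a_{t,u} z ^ u`, in which the constant term carries positive weight at degree `0`.
-/

open Finset Filter Real Topology

/-- The binary entropy function (in nats). -/
noncomputable def hEnt (x : ℝ) : ℝ := -x * Real.log x - (1 - x) * Real.log (1 - x)

section Afun

variable {ι : Type*} {s : ι → ℕ} {a : ι → ℕ → ℝ} {t : ι}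

lemma mul_deriv_Afun (z : ℝ) :
    z * deriv (Afun s a t) z = ∑ u ∈ range (s t + 1), (u : ℝ) * a t u * z ^ u := by
  have hd : HasDerivAt (Afun s a t)
      (∑ u ∈ range (s t + 1), a t u * ((u : ℝ) * z ^ (u - 1))) z :=
    HasDerivAt.fun_sum fun u _ => (hasDerivAt_pow u z).const_mul (a t u)
  rw [hd.deriv, mul_sum]
  refine sum_congr rfl fun u _ => ?_
  cases u with
  | zero => simp
  | succ n => rw [Nat.add_sub_cancel]; push_cast; ring

lemma one_le_Afun (ha0 : a t 0 = 1) (hnn : ∀ u, 0 ≤ a t u) {z : ℝ} (hz : 0 ≤ z) :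
    1 ≤ Afun s a t z := by
  have hterm : ∀ u ∈ range (s t + 1), 0 ≤ a t u * z ^ u :=
    fun u _ => mul_nonneg (hnn u) (pow_nonneg hz u)
  rw [Afun]
  simpa [ha0] using single_le_sum hterm (mem_range.2 (Nat.succ_pos (s t)))

lemma mul_deriv_Afun_pos (hnn : ∀ u, 0 ≤ a t u) {u : ℕ} (hu : 0 < u) (hus : u ≤ s t)
    (hau : 0 < a t u) {z : ℝ} (hz : 0 < z) : 0 < z * deriv (Afun s a t) z := by
  rw [mul_deriv_Afun]
  refine sum_pos' (fun v _ => mul_nonneg (mul_nonneg v.cast_nonneg (hnn v)) (pow_nonneg hz.le v))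
    ⟨u, mem_range.2 (Nat.lt_succ_of_le hus), ?_⟩
  have : (0 : ℝ) < u := Nat.cast_pos.2 hu
  positivity

lemma mul_deriv_Afun_lt (ha0 : a t 0 = 1) (hnn : ∀ u, 0 ≤ a t u) {N : ℕ} (hN : 0 < N)
    (hdeg : ∀ u, a t u ≠ 0 → u ≤ N) {z : ℝ} (hz : 0 ≤ z) :
    z * deriv (Afun s a t) z < N * Afun s a t z := by
  rw [mul_deriv_Afun, Afun, mul_sum]
  refine sum_lt_sum (fun u _ => ?_) ⟨0, mem_range.2 (Nat.succ_pos (s t)), by simp [ha0, hN]⟩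
  rcases eq_or_ne (a t u) 0 with h | h
  · simp [h]
  · rw [mul_assoc]
    exact mul_le_mul_of_nonneg_right (by exact_mod_cast hdeg u h)
      (mul_nonneg (hnn u) (pow_nonneg hz u))

end Afun

section ff

variable {ι : Type*} [Fintype ι] [Nonempty ι] {s : ι → ℕ} {a : ι → ℕ → ℝ} {γ : ι → ℝ}
  {c z : ℝ}

lemma ff_pos (hc : 0 < c) (hγ : ∀ t, 0 < γ t) (hA : ∀ t, 0 < Afun s a t z)
    (hD : ∀ t, 0 < z * deriv (Afun s a t) z) : 0 < ff s a γ c z :=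
  mul_pos hc (sum_pos (fun t _ => div_pos (mul_pos (hγ t) (hD t)) (hA t)) univ_nonempty)

lemma ff_lt (hc : 0 < c) (hγ : ∀ t, 0 < γ t) (hA : ∀ t, 0 < Afun s a t z) {N : ι → ℝ}
    (hD : ∀ t, z * deriv (Afun s a t) z < N t * Afun s a t z) :
    ff s a γ c z < c * ∑ t, γ t * N t := by
  refine mul_lt_mul_of_pos_left (sum_lt_sum_of_nonempty univ_nonempty fun t _ => ?_) hc
  rw [mul_div_assoc]
  exact mul_lt_mul_of_pos_left ((div_lt_iff₀ (hA t)).2 (hD t)) (hγ t)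

end ff

section odds

variable {α z : ℝ}

lemma mul_odds_div (hz : z ≠ 0) : z * (α / ((1 - α) * z)) = α / (1 - α) := by
  field_simp

lemma odds_zpow_mul_pow (hα0 : α ≠ 0) (hα1 : α ≠ 1) (hz : z ≠ 0) (q : ℕ) :
    (α / (1 - α)) ^ ((1 : ℤ) - q) * z ^ q * (α / ((1 - α) * z)) ^ q = α / (1 - α) := by
  have h1α : 1 - α ≠ 0 := sub_ne_zero.2 hα1.symm
  rw [mul_assoc, ← mul_pow, mul_odds_div hz, zpow_sub₀ (div_ne_zero hα0 h1α), zpow_one,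
    zpow_natCast, div_mul_cancel₀ _ (pow_ne_zero _ (div_ne_zero hα0 h1α))]

lemma odds_div_one_add_odds (hα1 : α ≠ 1) : α / (1 - α) / (1 + α / (1 - α)) = α := by
  have h1α : 1 - α ≠ 0 := sub_ne_zero.2 hα1.symm
  field_simp
  ring

lemma log_one_add_odds_sub (hα0 : 0 < α) (hα1 : α < 1) (hz : 0 < z) (q : ℕ) :
    log (1 + α / (1 - α)) - α * log ((α / (1 - α)) ^ ((1 : ℤ) - q) * z ^ q)
      + q * log (1 - α) = (1 - q) * hEnt α - q * α * log z := by
  have h1α : 0 < 1 - α := sub_pos.2 hα1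
  have hsum : 1 + α / (1 - α) = (1 - α)⁻¹ := by field_simp; ring
  rw [hsum, log_inv, log_mul (zpow_ne_zero _ (div_pos hα0 h1α).ne') (pow_ne_zero _ hz.ne'),
    log_zpow, log_pow, log_div hα0.ne' h1α.ne', hEnt]
  push_cast
  ring

end odds

theorem stmt_9_general {ι : Type*} [Fintype ι] [Nonempty ι]
    (q : ℕ) (hq : 2 ≤ q)
    (r s : ι → ℕ) (h2r : ∀ t, 2 ≤ r t)
    (a : ι → ℕ → ℝ)
    (ha0 : ∀ t, a t 0 = 1)
    (hhigh : ∀ t u, s t < u → a t u = 0)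
    (hnn : ∀ t u, 0 ≤ a t u)
    (har : ∀ t, 0 < a t (r t))
    (ubar : ι → ℕ)
    (hubar : ∀ t, 0 < a t (ubar t) ∧ ∀ u, a t u ≠ 0 → u ≤ ubar t)
    (γ : ι → ℝ) (hγ : ∀ t, 0 < γ t) (c : ℝ) (hc : 0 < c)
    (hnorm : c * ∑ t, γ t * (s t : ℝ) = 1) :
    ∀ z : ℝ, 0 < z →
      (0 < ff s a γ c z ∧ ff s a γ c z < c * ∑ t, γ t * (ubar t : ℝ) ∧
        c * ∑ t, γ t * (ubar t : ℝ) ≤ 1) ∧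
      (let α : ℝ := ff s a γ c z
       let β : ℝ := (q : ℝ) * α
       let y0 : ℝ := α / ((1 - α) * z)
       let x0 : ℝ := (α / (1 - α)) ^ ((1 : ℤ) - (q : ℤ)) * z ^ q
       x0 * y0 ^ q / (1 + x0 * y0 ^ q) = α ∧
       α = β / q ∧
       z * y0 / (1 + z * y0) = β / q ∧
       c * ∑ t, γ t * (z * deriv (Afun s a t) z) / Afun s a t z = β / q ∧
       (Real.log (1 + x0 * y0 ^ q) - α * Real.log x0
           + (q : ℝ) * c * ∑ t, γ t * Real.log (Afun s a t z)
           + (q : ℝ) * Real.log (1 - β / q)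
         = (1 - (q : ℝ)) * hEnt α - (q : ℝ) * α * Real.log z
           + (q : ℝ) * c * ∑ t, γ t * Real.log (Afun s a t z))) := by
  intro z hz
  have hubar_pos : ∀ t, 0 < ubar t := fun t => by
    have := (hubar t).2 _ (har t).ne'
    linarith [h2r t]
  have hubar_le : ∀ t, ubar t ≤ s t := fun t =>
    not_lt.1 fun h => (hubar t).1.ne' (hhigh t _ h)
  have hA : ∀ t, 0 < Afun s a t z := fun t =>
    one_pos.trans_le (one_le_Afun (ha0 t) (hnn t) hz.le)
  have hα0 : 0 < ff s a γ c z := ff_pos hc hγ hA fun t =>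
    mul_deriv_Afun_pos (hnn t) (hubar_pos t) (hubar_le t) (hubar t).1 hz
  have hαM : ff s a γ c z < c * ∑ t, γ t * (ubar t : ℝ) := ff_lt hc hγ hA fun t =>
    mul_deriv_Afun_lt (ha0 t) (hnn t) (hubar_pos t) (hubar t).2 hz.le
  have hM1 : c * ∑ t, γ t * (ubar t : ℝ) ≤ 1 := hnorm ▸ mul_le_mul_of_nonneg_left
    (sum_le_sum fun t _ => mul_le_mul_of_nonneg_left (Nat.cast_le.2 (hubar_le t)) (hγ t).le) hc.le
  refine ⟨⟨hα0, hαM, hM1⟩, ?_⟩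
  set α := ff s a γ c z
  have hα1 : α < 1 := hαM.trans_le hM1
  have hβ : (q : ℝ) * α / q = α := mul_div_cancel_left₀ α (Nat.cast_ne_zero.2 (by omega))
  dsimp only
  rw [hβ, odds_zpow_mul_pow hα0.ne' hα1.ne hz.ne', mul_odds_div hz.ne',
    odds_div_one_add_odds hα1.ne]
  refine ⟨rfl, rfl, rfl, rfl, ?_⟩
  linarith [log_one_add_odds_sub hα0 hα1 hz q]

/-- under the normalization `c ⬝ ∑_t γ_t s_t = 1`:  let `z > 0`, set `α = f(z)`
(so `0 < α < M ≤ 1`), `β = qα`, `y₀ = α/((1−α)z)`, `x₀ = (α/(1−α))^{1−q} z^q`.  Then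
(i) `x₀y₀^q/(1+x₀y₀^q) = α = β/q`; (ii) `z y₀/(1+z y₀) = β/q`;
(iii) `c ∑_t γ_t z A_t′(z)/A_t(z) = β/q`; and (iv)
`log(1+x₀y₀^q) − α log x₀ + qc ∑_t γ_t log A_t(z) + q log(1−β/q)
  = (1−q)h(α) − qα log z + qc ∑_t γ_t log A_t(z)`
(the growth-rate formula of Theorem 1 evaluates to the repetition-VN spectral shape). -/
theorem stmt_9 {ι : Type*} [Fintype ι] [Nonempty ι]
    (q : ℕ) (hq : 2 ≤ q)
    (r s : ι → ℕ) (h2r : ∀ t, 2 ≤ r t) (hrs : ∀ t, r t ≤ s t)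
    (a : ι → ℕ → ℝ)
    (ha0 : ∀ t, a t 0 = 1)
    (hmid : ∀ t u, 0 < u → u < r t → a t u = 0)
    (hhigh : ∀ t u, s t < u → a t u = 0)
    (hnn : ∀ t u, 0 ≤ a t u)
    (har : ∀ t, 0 < a t (r t))
    (ubar : ι → ℕ)
    (hubar : ∀ t, 0 < a t (ubar t) ∧ ∀ u, a t u ≠ 0 → u ≤ ubar t)
    (γ : ι → ℝ) (hγ : ∀ t, 0 < γ t) (c : ℝ) (hc : 0 < c)
    (hnorm : c * ∑ t, γ t * (s t : ℝ) = 1) :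
    ∀ z : ℝ, 0 < z →
      (0 < ff s a γ c z ∧ ff s a γ c z < c * ∑ t, γ t * (ubar t : ℝ) ∧
        c * ∑ t, γ t * (ubar t : ℝ) ≤ 1) ∧
      (let α : ℝ := ff s a γ c z
       let β : ℝ := (q : ℝ) * α
       let y0 : ℝ := α / ((1 - α) * z)
       let x0 : ℝ := (α / (1 - α)) ^ ((1 : ℤ) - (q : ℤ)) * z ^ q
       x0 * y0 ^ q / (1 + x0 * y0 ^ q) = α ∧
       α = β / q ∧
       z * y0 / (1 + z * y0) = β / q ∧
       c * ∑ t, γ t * (z * deriv (Afun s a t) z) / Afun s a t z = β / q ∧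
       (Real.log (1 + x0 * y0 ^ q) - α * Real.log x0
           + (q : ℝ) * c * ∑ t, γ t * Real.log (Afun s a t z)
           + (q : ℝ) * Real.log (1 - β / q)
         = (1 - (q : ℝ)) * hEnt α - (q : ℝ) * α * Real.log z
           + (q : ℝ) * c * ∑ t, γ t * Real.log (Afun s a t z))) :=
  stmt_9_general q hq r s h2r a ha0 hhigh hnn har ubar hubar γ hγ c hc hnorm
end

section
/- Let I ⊆ (0,∞) be an open interval and let x₀, y₀, z₀, β : I → (0,∞) be differentiable functions such that β(α)·∫λ < 1 for all α ∈ I and, for every α ∈ I, the saddle-point system holds at (α; x₀(α), y₀(α), z₀(α), β(α)). Then the function G : I → ℝ defined by G(α) = Σ_{t∈I_v} δ_t log B_t(x₀(α),y₀(α)) − α log x₀(α) + (∫ρ/∫λ) Σ_{t∈I_c} γ_t log A_t(z₀(α)) + log(1 − β(α)∫λ)/∫λ is differentiable on I with G′(α) = −log x₀(α) for every α ∈ I. In particular, stationary points of G occur exactly at those α for which x₀(α) = 1. -/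
/-!
By (E4), `1 - β∫λ = 1/(1 + y₀z₀)`, so `G(α) = F(α, x₀(α), y₀(α), z₀(α))` with
`F(α, x, y, z) = ∑ δ_t log B_t(x,y) - α log x + (∫ρ/∫λ) ∑ γ_t log A_t(z) - log(1 + yz)/∫λ`.
Reading (E4) once more as `β = yz / (∫λ (1 + yz))`, the equations (E2), (E3), (E1) say exactly
that `∂F/∂x`, `∂F/∂y`, `∂F/∂z` vanish along the curve, so by the chain rule
`G′(α) = ∂F/∂α = -log x₀(α)`.
-/

open Finset Filter Real Topology

/-- The CN weight enumerating polynomial `A_t(z) = 1 + ∑_{u=r_t}^{s_t} a_{t,u} z^u`. -/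
noncomputable def AIcc {ι : Type*} (r s : ι → ℕ) (a : ι → ℕ → ℝ) (t : ι) (z : ℝ) : ℝ :=
  1 + ∑ u ∈ Finset.Icc (r t) (s t), a t u * z ^ u

/-- The VN input–output weight enumerating polynomial
`B_t(x,y) = 1 + ∑_{u=1}^{k_t} ∑_{v=p_t}^{q_t} b_{t,u,v} x^u y^v`. -/
noncomputable def BIcc {ι : Type*} (k p q : ι → ℕ) (b : ι → ℕ → ℕ → ℝ) (t : ι)
    (x y : ℝ) : ℝ :=
  1 + ∑ u ∈ Finset.Icc 1 (k t), ∑ v ∈ Finset.Icc (p t) (q t), b t u v * x ^ u * y ^ v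

/-- `∫ρ = ∑_t ρ_t/s_t` (and likewise `∫λ`). -/
noncomputable def intden {ι : Type*} [Fintype ι] (w : ι → ℝ) (n : ι → ℕ) : ℝ :=
  ∑ t, w t / n t

/-- `γ_t = ρ_t/(s_t ∫ρ)` (and likewise `δ_t = λ_t/(q_t ∫λ)`). -/
noncomputable def nodefrac {ι : Type*} [Fintype ι] (w : ι → ℝ) (n : ι → ℕ) (t : ι) : ℝ :=
  w t / (n t * intden w n)

/-- The growth-rate expression
`G(α) = ∑_t δ_t log B_t(x₀,y₀) − α log x₀ + (∫ρ/∫λ) ∑_t γ_t log A_t(z₀) + log(1−β∫λ)/∫λ`,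
evaluated along functions `x₀, y₀, z₀, β` of `α`. -/
noncomputable def Gfun {ιc ιv : Type*} [Fintype ιc] [Fintype ιv]
    (rc sc : ιc → ℕ) (a : ιc → ℕ → ℝ)
    (kv pv qv : ιv → ℕ) (b : ιv → ℕ → ℕ → ℝ)
    (ρ : ιc → ℝ) (lam : ιv → ℝ)
    (x₀ y₀ z₀ β : ℝ → ℝ) (α : ℝ) : ℝ :=
  ∑ t, nodefrac lam qv t * Real.log (BIcc kv pv qv b t (x₀ α) (y₀ α))
    - α * Real.log (x₀ α)
    + (intden ρ sc / intden lam qv) *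
        ∑ t, nodefrac ρ sc t * Real.log (AIcc rc sc a t (z₀ α))
    + Real.log (1 - β α * intden lam qv) / intden lam qv

theorem AIcc_pos_of_nonneg {ι : Type*} (r s : ι → ℕ) (a : ι → ℕ → ℝ) (t : ι) {z : ℝ}
    (ha : ∀ u, 0 ≤ a t u) (hz : 0 ≤ z) : 0 < AIcc r s a t z := by
  have : 0 ≤ ∑ u ∈ Icc (r t) (s t), a t u * z ^ u :=
    sum_nonneg fun u _ => mul_nonneg (ha u) (pow_nonneg hz u)
  unfold AIcc
  linarith

theorem BIcc_pos_of_nonneg {ι : Type*} (k p q : ι → ℕ) (b : ι → ℕ → ℕ → ℝ) (t : ι) {x y : ℝ}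
    (hb : ∀ u v, 0 ≤ b t u v) (hx : 0 ≤ x) (hy : 0 ≤ y) : 0 < BIcc k p q b t x y := by
  have : 0 ≤ ∑ u ∈ Icc 1 (k t), ∑ v ∈ Icc (p t) (q t), b t u v * x ^ u * y ^ v :=
    sum_nonneg fun u _ => sum_nonneg fun v _ =>
      mul_nonneg (mul_nonneg (hb u v) (pow_nonneg hx u)) (pow_nonneg hy v)
  unfold BIcc
  linarith

theorem differentiable_AIcc {ι : Type*} (r s : ι → ℕ) (a : ι → ℕ → ℝ) (t : ι) :
    Differentiable ℝ (AIcc r s a t) := by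
  unfold AIcc
  fun_prop

theorem differentiable_BIcc_uncurry {ι : Type*} (k p q : ι → ℕ) (b : ι → ℕ → ℕ → ℝ) (t : ι) :
    Differentiable ℝ (fun w : ℝ × ℝ => BIcc k p q b t w.1 w.2) := by
  unfold BIcc
  fun_prop

theorem hasDerivAt_comp₂_of_differentiableAt {f : ℝ → ℝ → ℝ} {x y : ℝ → ℝ} {s x' y' : ℝ}
    (hf : DifferentiableAt ℝ (fun w : ℝ × ℝ => f w.1 w.2) (x s, y s))
    (hx : HasDerivAt x x' s) (hy : HasDerivAt y y' s) :
    HasDerivAt (fun s => f (x s) (y s))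
      (deriv (f · (y s)) (x s) * x' + deriv (f (x s) ·) (y s) * y') s := by
  set L := fderiv ℝ (fun w : ℝ × ℝ => f w.1 w.2) (x s, y s)
  have hL : HasFDerivAt (fun w : ℝ × ℝ => f w.1 w.2) L (x s, y s) := hf.hasFDerivAt
  have hpx : HasDerivAt (f · (y s)) (L (1, 0)) (x s) := by
    have := hL.comp_hasDerivAt (x s) ((hasDerivAt_id (x s)).prodMk (hasDerivAt_const (x s) (y s)))
    exact this
  have hpy : HasDerivAt (f (x s) ·) (L (0, 1)) (y s) := by
    have := hL.comp_hasDerivAt (y s) ((hasDerivAt_const (y s) (x s)).prodMk (hasDerivAt_id (y s)))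
    exact this
  have hsplit : ((x', y') : ℝ × ℝ) = x' • ((1, 0) : ℝ × ℝ) + y' • (0, 1) := by simp
  have := hL.comp_hasDerivAt s (hx.prodMk hy)
  rwa [hsplit, map_add, map_smul, map_smul, smul_eq_mul, smul_eq_mul, ← hpx.deriv, ← hpy.deriv,
    mul_comm x', mul_comm y'] at this

theorem hasDerivAt_sum_mul_log_comp {ι : Type*} [Fintype ι] {f : ι → ℝ → ℝ} (w : ι → ℝ)
    {z : ℝ → ℝ} {α z' : ℝ} (hf : ∀ t, DifferentiableAt ℝ (f t) (z α))
    (hf0 : ∀ t, f t (z α) ≠ 0) (hz : HasDerivAt z z' α) :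
    HasDerivAt (fun s => ∑ t, w t * log (f t (z s)))
      ((∑ t, w t * deriv (f t) (z α) / f t (z α)) * z') α := by
  rw [sum_mul]
  refine HasDerivAt.fun_sum fun t _ => ?_
  have h := ((hf t).hasDerivAt.comp α hz).log (hf0 t)
  exact (h.const_mul (w t)).congr_deriv (by simp only [Function.comp_apply]; ring)

theorem hasDerivAt_sum_mul_log_comp₂ {ι : Type*} [Fintype ι] {f : ι → ℝ → ℝ → ℝ} (w : ι → ℝ)
    {x y : ℝ → ℝ} {α x' y' : ℝ}
    (hf : ∀ t, DifferentiableAt ℝ (fun v : ℝ × ℝ => f t v.1 v.2) (x α, y α))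
    (hf0 : ∀ t, f t (x α) (y α) ≠ 0) (hx : HasDerivAt x x' α) (hy : HasDerivAt y y' α) :
    HasDerivAt (fun s => ∑ t, w t * log (f t (x s) (y s)))
      ((∑ t, w t * deriv (f t · (y α)) (x α) / f t (x α) (y α)) * x' +
        (∑ t, w t * deriv (f t (x α) ·) (y α) / f t (x α) (y α)) * y') α := by
  rw [sum_mul, sum_mul, ← sum_add_distrib]
  refine HasDerivAt.fun_sum fun t _ => ?_
  have h := (hasDerivAt_comp₂_of_differentiableAt (hf t) hx hy).log (hf0 t)
  exact (h.const_mul (w t)).congr_deriv (by ring)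

theorem one_add_ne_zero_of_mul_one_add_eq {b w : ℝ} (h : b * (1 + w) = w) : 1 + w ≠ 0 :=
  fun hw => by
    rw [hw, mul_zero] at h
    linarith

theorem Real.log_one_sub_eq_neg_log_one_add {b w : ℝ} (h : b * (1 + w) = w) :
    log (1 - b) = -log (1 + w) := by
  have hw := one_add_ne_zero_of_mul_one_add_eq h
  rw [← Real.log_inv]
  congr 1
  field_simp
  linarith

theorem hasDerivAt_log_one_sub_mul_div {β w : ℝ → ℝ} {c α w' : ℝ}
    (hβw : ∀ᶠ s in 𝓝 α, β s * c * (1 + w s) = w s) (hw : HasDerivAt w w' α) :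
    HasDerivAt (fun s => log (1 - β s * c) / c) (-(w' / (1 + w α)) / c) α := by
  have hw0 := one_add_ne_zero_of_mul_one_add_eq hβw.self_of_nhds
  have hlog : HasDerivAt (fun s => -log (1 + w s) / c) (-(w' / (1 + w α)) / c) α := by
    simpa using (((hasDerivAt_const α 1).add hw).log hw0).neg.div_const c
  refine hlog.congr_of_eventuallyEq ?_
  filter_upwards [hβw] with s hs
  rw [Real.log_one_sub_eq_neg_log_one_add hs]

theorem saddle_point_cancel {x y z β c α L x' y' z' P Q R : ℝ} (hx : x ≠ 0) (hy : y ≠ 0)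
    (hz : z ≠ 0) (hP : x * P = α) (hQ : y * Q = β) (hR : z * R = β)
    (hE4 : β * c * (1 + y * z) = y * z) :
    P * x' + Q * y' - (1 * L + α * (x' / x)) + R * z' + -((y' * z + y * z') / (1 + y * z)) / c
      = -L := by
  have hc1 : c * (1 + y * z) ≠ 0 := fun h => mul_ne_zero hy hz (by linear_combination β * h - hE4)
  have hc := left_ne_zero_of_mul hc1
  have h1 := right_ne_zero_of_mul hc1
  obtain rfl : P = α / x := by rw [eq_div_iff hx]; linarith
  obtain rfl : Q = β / y := by rw [eq_div_iff hy]; linarith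
  obtain rfl : R = β / z := by rw [eq_div_iff hz]; linarith
  field_simp
  linear_combination (y' * z + y * z') * x * hE4

theorem stmt_11_general {ιc ιv : Type*} [Fintype ιc] [Fintype ιv]
    (rc sc : ιc → ℕ)
    (a : ιc → ℕ → ℝ) (hann : ∀ t u, 0 ≤ a t u)
    (kv pv qv : ιv → ℕ)
    (b : ιv → ℕ → ℕ → ℝ) (hbnn : ∀ t u v, 0 ≤ b t u v)
    (ρ : ιc → ℝ) (lam : ιv → ℝ)
    (lo hi : ℝ)
    (x₀ y₀ z₀ β : ℝ → ℝ)
    (hpos : ∀ α ∈ Set.Ioo lo hi, 0 < x₀ α ∧ 0 < y₀ α ∧ 0 < z₀ α ∧ 0 < β α)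
    (hdiff : ∀ α ∈ Set.Ioo lo hi, DifferentiableAt ℝ x₀ α ∧ DifferentiableAt ℝ y₀ α ∧
      DifferentiableAt ℝ z₀ α ∧ DifferentiableAt ℝ β α)
    (hE1 : ∀ α ∈ Set.Ioo lo hi,
      z₀ α * ((intden ρ sc / intden lam qv) *
        ∑ t, nodefrac ρ sc t * deriv (AIcc rc sc a t) (z₀ α) / AIcc rc sc a t (z₀ α)) = β α)
    (hE2 : ∀ α ∈ Set.Ioo lo hi,
      x₀ α * ∑ t, nodefrac lam qv t *
        deriv (fun x => BIcc kv pv qv b t x (y₀ α)) (x₀ α)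
          / BIcc kv pv qv b t (x₀ α) (y₀ α) = α)
    (hE3 : ∀ α ∈ Set.Ioo lo hi,
      y₀ α * ∑ t, nodefrac lam qv t *
        deriv (fun y => BIcc kv pv qv b t (x₀ α) y) (y₀ α)
          / BIcc kv pv qv b t (x₀ α) (y₀ α) = β α)
    (hE4 : ∀ α ∈ Set.Ioo lo hi,
      (β α * intden lam qv) * (1 + y₀ α * z₀ α) = y₀ α * z₀ α) :
    ∀ α ∈ Set.Ioo lo hi,
      HasDerivAt (Gfun rc sc a kv pv qv b ρ lam x₀ y₀ z₀ β) (-Real.log (x₀ α)) α ∧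
      (deriv (Gfun rc sc a kv pv qv b ρ lam x₀ y₀ z₀ β) α = 0 ↔ x₀ α = 1) := by
  intro α hα
  obtain ⟨hx0, hy0, hz0, -⟩ := hpos α hα
  obtain ⟨hx, hy, hz, -⟩ := hdiff α hα
  have hB := hasDerivAt_sum_mul_log_comp₂ (nodefrac lam qv)
    (fun t => (differentiable_BIcc_uncurry kv pv qv b t).differentiableAt)
    (fun t => (BIcc_pos_of_nonneg kv pv qv b t (hbnn t) hx0.le hy0.le).ne')
    hx.hasDerivAt hy.hasDerivAt
  have hαx := (hasDerivAt_id' α).fun_mul (hx.hasDerivAt.log hx0.ne')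
  have hA := (hasDerivAt_sum_mul_log_comp (nodefrac ρ sc)
    (fun t => (differentiable_AIcc rc sc a t).differentiableAt)
    (fun t => (AIcc_pos_of_nonneg rc sc a t (hann t) hz0.le).ne')
    hz.hasDerivAt).const_mul (intden ρ sc / intden lam qv)
  have hβ := hasDerivAt_log_one_sub_mul_div
    (eventually_of_mem (isOpen_Ioo.mem_nhds hα) hE4) (hy.hasDerivAt.fun_mul hz.hasDerivAt)
  have hG : HasDerivAt (Gfun rc sc a kv pv qv b ρ lam x₀ y₀ z₀ β) (-log (x₀ α)) α :=
    (((hB.sub hαx).add hA).add hβ).congr_deriv (by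
      linear_combination saddle_point_cancel (L := log (x₀ α)) (x' := deriv x₀ α)
        (y' := deriv y₀ α) (z' := deriv z₀ α) hx0.ne' hy0.ne' hz0.ne'
        (hE2 α hα) (hE3 α hα) (hE1 α hα) (hE4 α hα))
  refine ⟨hG, ?_⟩
  rw [hG.deriv, neg_eq_zero, ← log_one]
  exact log_injOn_pos.eq_iff hx0 (Set.mem_Ioi.2 one_pos)

/-- if differentiable positive functions `x₀, y₀, z₀, β` on an open interval
`I ⊆ (0,∞)` satisfy `β∫λ < 1` and the saddle-point system (E1)–(E4) on `I`, then `G` is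
differentiable on `I` with `G′(α) = −log x₀(α)`; in particular `G′(α) = 0 ↔ x₀(α) = 1`. -/
theorem stmt_11 {ιc ιv : Type*} [Fintype ιc] [Nonempty ιc] [Fintype ιv] [Nonempty ιv]
    (rc sc : ιc → ℕ) (h2r : ∀ t, 2 ≤ rc t) (hrs : ∀ t, rc t ≤ sc t)
    (a : ιc → ℕ → ℝ) (hann : ∀ t u, 0 ≤ a t u) (har : ∀ t, 0 < a t (rc t))
    (kv pv qv : ιv → ℕ) (hkv : ∀ t, 1 ≤ kv t) (hpv : ∀ t, 2 ≤ pv t) (hpq : ∀ t, pv t ≤ qv t)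
    (b : ιv → ℕ → ℕ → ℝ) (hbnn : ∀ t u v, 0 ≤ b t u v)
    (hbne : ∀ t, ∃ u ∈ Finset.Icc 1 (kv t), ∃ v ∈ Finset.Icc (pv t) (qv t), b t u v ≠ 0)
    (ρ : ιc → ℝ) (lam : ιv → ℝ) (hρ : ∀ t, 0 < ρ t) (hlam : ∀ t, 0 < lam t)
    (hρ1 : ∑ t, ρ t = 1) (hlam1 : ∑ t, lam t = 1)
    (lo hi : ℝ) (hlo : 0 ≤ lo)
    (x₀ y₀ z₀ β : ℝ → ℝ)
    (hpos : ∀ α ∈ Set.Ioo lo hi, 0 < x₀ α ∧ 0 < y₀ α ∧ 0 < z₀ α ∧ 0 < β α)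
    (hdiff : ∀ α ∈ Set.Ioo lo hi, DifferentiableAt ℝ x₀ α ∧ DifferentiableAt ℝ y₀ α ∧
      DifferentiableAt ℝ z₀ α ∧ DifferentiableAt ℝ β α)
    (hβL : ∀ α ∈ Set.Ioo lo hi, β α * intden lam qv < 1)
    (hE1 : ∀ α ∈ Set.Ioo lo hi,
      z₀ α * ((intden ρ sc / intden lam qv) *
        ∑ t, nodefrac ρ sc t * deriv (AIcc rc sc a t) (z₀ α) / AIcc rc sc a t (z₀ α)) = β α)
    (hE2 : ∀ α ∈ Set.Ioo lo hi,
      x₀ α * ∑ t, nodefrac lam qv t *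
        deriv (fun x => BIcc kv pv qv b t x (y₀ α)) (x₀ α)
          / BIcc kv pv qv b t (x₀ α) (y₀ α) = α)
    (hE3 : ∀ α ∈ Set.Ioo lo hi,
      y₀ α * ∑ t, nodefrac lam qv t *
        deriv (fun y => BIcc kv pv qv b t (x₀ α) y) (y₀ α)
          / BIcc kv pv qv b t (x₀ α) (y₀ α) = β α)
    (hE4 : ∀ α ∈ Set.Ioo lo hi,
      (β α * intden lam qv) * (1 + y₀ α * z₀ α) = y₀ α * z₀ α) :
    ∀ α ∈ Set.Ioo lo hi,
      HasDerivAt (Gfun rc sc a kv pv qv b ρ lam x₀ y₀ z₀ β) (-Real.log (x₀ α)) α ∧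
      (deriv (Gfun rc sc a kv pv qv b ρ lam x₀ y₀ z₀ β) α = 0 ↔ x₀ α = 1) :=
  stmt_11_general rc sc a hann kv pv qv b hbnn ρ lam lo hi x₀ y₀ z₀ β hpos hdiff hE1 hE2 hE3 hE4
end

section
/- Let ξ = p₁/q′ and θ = p₂/q′ with p₁, p₂, q′ positive integers, and suppose x₀, y₀ > 0 satisfy x₀ · ∂B/∂x(x₀,y₀)/B(x₀,y₀) = ξ and y₀ · ∂B/∂y(x₀,y₀)/B(x₀,y₀) = θ. Then, as m → ∞ along integers m for which the coefficient of x^{p₁m} y^{p₂m} in B(x,y)^{q′m} is nonzero, one has (1/(q′m)) · log(coefficient of x^{p₁m} y^{p₂m} in B(x,y)^{q′m}) → log B(x₀,y₀) − ξ log x₀ − θ log y₀. -/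
open Finset Filter Real Topology

/-- The bivariate polynomial `B(x,y) = 1 + ∑_{u=1}^{k} ∑_{v=c}^{d} B_{u,v} x^u y^v`
in `ℝ[x,y]`, with variable `0` playing the role of `x` and variable `1` that of `y`. -/
noncomputable def Bmv (k c d : ℕ) (b : ℕ → ℕ → ℝ) : MvPolynomial (Fin 2) ℝ :=
  1 + ∑ u ∈ Finset.Icc 1 k, ∑ v ∈ Finset.Icc c d,
    MvPolynomial.monomial (Finsupp.single (0 : Fin 2) u + Finsupp.single (1 : Fin 2) v) (b u v)

open Matrix
open scoped Nat

/-!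
Write `B = ∑ c_μ X^μ` with `c ≥ 0`, `z = (x₀, y₀)`, `ν = (p₁, p₂)`, `q = q'`, and let `a m` be the
coefficient of `X^(m ν)` in `B^(q m)`. The upper bound is the saddle-point bound
`a m * z^(m ν) ≤ B(z)^(q m)`.

For the lower bound, the tilted distribution `t_μ = c_μ z^μ / B(z)` on the support of `B` has mean
`ν / q` precisely because of the saddle-point equations, and its weighted entropy
`∑ t_μ log (c_μ / t_μ)` equals `log B(z) - ∑ (ν_j / q) log z_j`. Rational points are dense among the
distributions with mean `ν / q` (a rational affine subspace), so clearing denominators gives integer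
weights `w` with `∑ w = q D`, `∑ w_μ μ = D ν` and entropy of `w / (q D)` close to that of `t`. The
multinomial term of `B^(q D j)` indexed by `j w`, estimated with Stirling's formula, bounds
`a (D j)` below by `exp (q D j · entropy - O(log j))`. Finally `a` is supermultiplicative, so a
fixed nonzero `a r` in each residue class modulo `D` carries the bound over to all `m` with
`a m ≠ 0`.
-/

theorem LinearMap.exists_comp_comp_eq_self {K V W : Type*} [DivisionRing K] [AddCommGroup V]
    [Module K V] [AddCommGroup W] [Module K W] (f : V →ₗ[K] W) :
    ∃ g : W →ₗ[K] V, f ∘ₗ g ∘ₗ f = f := by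
  obtain ⟨g, hg⟩ := f.rangeRestrict.exists_rightInverse_of_surjective f.range_rangeRestrict
  obtain ⟨p, hp⟩ := (range f).subtype.exists_leftInverse_of_injective (Submodule.ker_subtype _)
  refine ⟨g ∘ₗ p, LinearMap.ext fun v => ?_⟩
  have hpv : p (f v) = f.rangeRestrict v := LinearMap.congr_fun hp (f.rangeRestrict v)
  have hfg : ∀ y, f (g y) = y := fun y => congrArg Subtype.val (LinearMap.congr_fun hg y)
  simp [hpv, hfg]

theorem Matrix.exists_mul_mul_eq_self {K m n : Type*} [Field K] [Fintype m] [Fintype n]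
    (A : Matrix m n K) : ∃ G : Matrix n m K, A * G * A = A := by
  classical
  obtain ⟨g, hg⟩ := (toLin' A).exists_comp_comp_eq_self
  refine ⟨LinearMap.toMatrix' g, toLin'.injective ?_⟩
  rw [toLin'_mul, toLin'_mul, toLin'_toMatrix', LinearMap.comp_assoc, hg]

theorem Matrix.map_ratCast_mulVec {k n : Type*} [Fintype n] (M : Matrix k n ℚ) (v : n → ℚ) :
    M.map (↑) *ᵥ (fun i => (v i : ℝ)) = fun i => ((M *ᵥ v) i : ℝ) :=
  funext fun i => ((Rat.castHom ℝ).map_mulVec M v i).symm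

theorem mem_closure_image_ratCast_solutions {m n : Type*} [Fintype m] [Fintype n]
    (A : Matrix m n ℚ) (β : m → ℚ) {t : n → ℝ} (ht : A.map (↑) *ᵥ t = fun i => (β i : ℝ)) :
    t ∈ closure ((fun s i => (s i : ℝ)) '' {s | A *ᵥ s = β}) := by
  obtain ⟨G, hG⟩ := A.exists_mul_mul_eq_self
  have hGβ : A *ᵥ (G *ᵥ β) = β := by
    have hGℝ := congrArg (Matrix.map · (Rat.castHom ℝ)) hG
    rw [Matrix.map_mul, Matrix.map_mul] at hGℝ
    simp only [Rat.coe_castHom] at hGℝ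
    have hℝ : A.map (↑) *ᵥ (G.map (↑) *ᵥ fun i => (β i : ℝ)) = fun i => (β i : ℝ) := by
      rw [← ht, mulVec_mulVec, mulVec_mulVec, hGℝ]
    rw [map_ratCast_mulVec, map_ratCast_mulVec] at hℝ
    exact funext fun i => by exact_mod_cast congrFun hℝ i
  -- `F` is a continuous retraction onto the real solutions sending rational vectors to rational
  -- solutions, so it carries the density of `ℚⁿ` over to the rational solutions.
  let F : (n → ℝ) → (n → ℝ) := fun p => p + G.map (↑) *ᵥ ((fun i => (β i : ℝ)) - A.map (↑) *ᵥ p)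
  have hF : Continuous F := by fun_prop
  have hFt : F t = t := by simp [F, ht]
  have hdense : t ∈ closure (Set.range fun (s : n → ℚ) i => (s i : ℝ)) :=
    (DenseRange.piMap fun _ => Rat.denseRange_cast) t
  rw [← hFt]
  refine map_mem_closure hF hdense ?_
  rintro _ ⟨g, rfl⟩
  refine ⟨g + G *ᵥ (β - A *ᵥ g), ?_, ?_⟩
  · rw [Set.mem_ofPred_eq, mulVec_add, mulVec_sub, mulVec_sub, hGβ, mulVec_mulVec, mulVec_mulVec,
      hG]
    abel
  · have hsub : ((fun i => (β i : ℝ)) - fun i => ((A *ᵥ g) i : ℝ)) =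
        fun i => ((β - A *ᵥ g) i : ℝ) := by
      funext i
      simp
    funext i
    simp only [F, map_ratCast_mulVec, hsub]
    simp

theorem exists_rat_sum_eq_one_near {ι σ : Type*} [Fintype ι] [Fintype σ] (e : ι → σ → ℕ)
    (α : σ → ℚ) {t : ι → ℝ} (ht : ∑ i, t i = 1)
    (hα : ∀ j, ∑ i, t i * e i j = α j) {p : (ι → ℝ) → Prop} (hp : ∀ᶠ x in 𝓝 t, p x) :
    ∃ s : ι → ℚ, ∑ i, s i = 1 ∧ (∀ j, ∑ i, s i * e i j = α j) ∧ p fun i => s i := by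
  let A : Matrix (Option σ) ι ℚ := Matrix.of fun r i => r.elim 1 fun j => (e i j : ℚ)
  let β : Option σ → ℚ := fun r => r.elim 1 α
  have hA : A.map (↑) *ᵥ t = fun r => (β r : ℝ) := by
    funext r
    cases r <;> simp [A, β, mulVec, dotProduct, ht, ← hα, mul_comm]
  obtain ⟨_, hx, s, hs, rfl⟩ :=
    mem_closure_iff_nhds.1 (mem_closure_image_ratCast_solutions A β hA) {x | p x} hp
  refine ⟨s, ?_, fun j => ?_, hx⟩
  · simpa [A, β, mulVec, dotProduct] using congrFun hs none
  · simpa [A, β, mulVec, dotProduct, mul_comm] using congrFun hs (some j)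

theorem exists_natCast_eq_mul_of_nonneg {ι : Type*} [Fintype ι] (s : ι → ℚ)
    (hs : ∀ i, 0 ≤ s i) : ∃ D : ℕ, 0 < D ∧ ∃ w : ι → ℕ, ∀ i, (w i : ℚ) = D * s i := by
  refine ⟨∏ i, (s i).den, prod_pos fun i _ => (s i).den_pos, ?_⟩
  have hw : ∀ i, ∃ w : ℕ, (w : ℚ) = (∏ i, (s i).den : ℕ) * s i := by
    intro i
    obtain ⟨k, hk⟩ := dvd_prod_of_mem (fun i => (s i).den) (mem_univ i)
    refine ⟨k * (s i).num.toNat, ?_⟩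
    have hnum : ((s i).num.toNat : ℚ) = (s i).num := by
      exact_mod_cast Int.toNat_of_nonneg (Rat.num_nonneg.2 (hs i))
    rw [hk, Nat.cast_mul, Nat.cast_mul, hnum, ← Rat.mul_den_eq_num]
    ring
  choose w hw using hw
  exact ⟨w, hw⟩

theorem Real.log_factorial_le (n : ℕ) : log n ! ≤ n * log n - n + log n / 2 + 1 := by
  rcases Nat.eq_zero_or_pos n with rfl | hn
  · simp
  have hn' : (0 : ℝ) < n := by exact_mod_cast hn
  have hle : log (Stirling.stirlingSeq n) ≤ log (Stirling.stirlingSeq 1) := by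
    simpa [Nat.sub_add_cancel hn] using Stirling.log_stirlingSeq'_antitone (Nat.zero_le (n - 1))
  rw [Stirling.log_stirlingSeq_formula, Stirling.log_stirlingSeq_formula,
    log_mul (by norm_num) hn'.ne', log_div hn'.ne' (exp_pos 1).ne'] at hle
  simp only [Nat.cast_one, Nat.factorial_one, log_one, mul_one, one_mul,
    log_div one_ne_zero (exp_pos 1).ne', log_exp] at hle
  linarith

theorem Real.le_log_factorial (n : ℕ) : n * log n - n ≤ log n ! := by
  rcases Nat.eq_zero_or_pos n with rfl | hn
  · simp
  have h2π : 0 ≤ log (2 * π) := log_nonneg (by linarith [pi_gt_three])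
  linarith [Stirling.le_log_factorial_stirling hn.ne', log_natCast_nonneg n]

theorem le_log_multinomial {ι : Type*} [Fintype ι] (κ : ι → ℕ) {n : ℕ} (hn : ∑ i, κ i = n) :
    n * log n - ∑ i, κ i * log (κ i) - Fintype.card ι * (log n / 2 + 1) ≤
      log (Nat.multinomial univ κ) := by
  have hspec := Nat.multinomial_spec univ κ
  rw [hn] at hspec
  have hlog : log (Nat.multinomial univ κ) = log n ! - ∑ i, log (κ i)! := by
    have hmul : (0 : ℝ) < Nat.multinomial univ κ := by exact_mod_cast Nat.multinomial_pos _ _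
    rw [← hspec, Nat.cast_mul, Nat.cast_prod, log_mul (by positivity) hmul.ne',
      log_prod fun i _ => by positivity]
    ring
  have hfac : ∀ i, log (κ i)! ≤ κ i * log (κ i) - κ i + (log n / 2 + 1) := by
    intro i
    have hκn : log (κ i) ≤ log n := by
      rcases Nat.eq_zero_or_pos (κ i) with h | h
      · simp [h, log_natCast_nonneg]
      · have hle : κ i ≤ n := hn ▸ single_le_sum (fun j _ => Nat.zero_le (κ j)) (mem_univ i)
        exact log_le_log (by exact_mod_cast h) (by exact_mod_cast hle)
    linarith [log_factorial_le (κ i)]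
  have hsum := sum_le_sum fun i (_ : i ∈ univ) => hfac i
  simp only [sum_add_distrib, sum_sub_distrib, sum_const, card_univ, nsmul_eq_mul] at hsum
  rw [← Nat.cast_sum, hn] at hsum
  linarith [le_log_factorial n]

/-- `∑ i, p i * log (c i / p i)`, minus the relative entropy of `p` with respect to `c`. -/
noncomputable def weightedEntropy {ι : Type*} [Fintype ι] (c p : ι → ℝ) : ℝ :=
  ∑ i, (negMulLog (p i) + p i * log (c i))

theorem continuous_weightedEntropy {ι : Type*} [Fintype ι] (c : ι → ℝ) :
    Continuous (weightedEntropy c) := by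
  unfold weightedEntropy
  fun_prop

theorem natCast_mul_weightedEntropy {ι : Type*} [Fintype ι] (c : ι → ℝ) (κ : ι → ℕ) {n : ℕ}
    (hn : ∑ i, κ i = n) :
    n * weightedEntropy c (fun i => κ i / n) =
      n * log n - ∑ i, κ i * log (κ i) + ∑ i, κ i * log (c i) := by
  have hterm : ∀ i, (n : ℝ) * (negMulLog (κ i / n) + κ i / n * log (c i)) =
      κ i * log n - κ i * log (κ i) + κ i * log (c i) := by
    intro i
    rcases Nat.eq_zero_or_pos (κ i) with h | h
    · simp [h]
    have hle : κ i ≤ n := hn ▸ single_le_sum (fun j _ => Nat.zero_le (κ j)) (mem_univ i)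
    have hκ : (0 : ℝ) < κ i := by exact_mod_cast h
    have hn : (0 : ℝ) < n := by exact_mod_cast h.trans_le hle
    rw [negMulLog, log_div hκ.ne' hn.ne']
    field_simp
    ring
  rw [weightedEntropy, mul_sum, sum_congr rfl fun i _ => hterm i, sum_add_distrib,
    sum_sub_distrib, ← sum_mul, ← Nat.cast_sum, hn]

theorem eventually_mul_log_add_le (K : ℝ) {ε : ℝ} (hε : 0 < ε) :
    ∀ᶠ n : ℕ in atTop, K * (log n / 2 + 1) ≤ ε * n := by
  have h := ((isLittleO_log_id_atTop.const_mul_left (K / 2)).add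
    (Asymptotics.isLittleO_const_id_atTop K)).bound hε
  filter_upwards [tendsto_natCast_atTop_atTop.eventually h] with n hn
  simp only [id, norm_eq_abs, Nat.abs_cast] at hn
  linarith [le_abs_self (K / 2 * log n + K)]

theorem eventually_lt_log_div_of_modEq {a : ℕ → ℝ} (ha₀ : ∀ m, 0 ≤ a m)
    (ha : ∀ m n, a m * a n ≤ a (m + n)) {M : ℕ} {F : ℝ}
    (hF : ∀ᶠ j in atTop, exp (F * (M * j : ℕ)) ≤ a (M * j)) {F' : ℝ} (hF' : F' < F) {r : ℕ}
    (hr : a r ≠ 0) : ∀ᶠ m in atTop, m ≡ r [MOD M] → F' < log (a m) / m := by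
  obtain ⟨J, hJ⟩ := eventually_atTop.1 hF
  have har : 0 < a r := (ha₀ r).lt_of_ne' hr
  have htend : Tendsto (fun m : ℕ => (log (a r) - F * r) / m + F) atTop (𝓝 F) := by
    simpa using (tendsto_const_div_atTop_nhds_zero_nat (log (a r) - F * r)).add_const F
  filter_upwards [htend.eventually (lt_mem_nhds hF'), eventually_ge_atTop (r + M * J + 1)]
    with m hlt hm hmod
  have hrm : r ≤ m := by omega
  obtain ⟨j, hj⟩ := (Nat.modEq_iff_dvd' hrm).1 hmod.symm
  have hJj : J ≤ j := by
    by_contra! h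
    have := Nat.mul_le_mul_left M h.le
    omega
  have hsplit : a r * exp (F * (M * j : ℕ)) ≤ a m :=
    calc a r * exp (F * (M * j : ℕ)) ≤ a r * a (M * j) :=
          mul_le_mul_of_nonneg_left (hJ j hJj) har.le
      _ ≤ a m := by rw [show m = r + M * j by omega]; exact ha r (M * j)
  have hlog : log (a r) + F * (m - r) ≤ log (a m) := by
    rw [show (m : ℝ) - r = (M * j : ℕ) by rw [← hj, Nat.cast_sub hrm], ← log_exp (F * _),
      ← log_mul har.ne' (exp_pos _).ne']
    exact log_le_log (by positivity) hsplit
  have hm0 : (0 : ℝ) < m := by exact_mod_cast (show 0 < m by omega)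
  calc F' < (log (a r) - F * r) / m + F := hlt
    _ = (log (a r) + F * (m - r)) / m := by field_simp; ring
    _ ≤ log (a m) / m := div_le_div_of_nonneg_right hlog hm0.le

theorem eventually_lt_log_div {a : ℕ → ℝ} (ha₀ : ∀ m, 0 ≤ a m)
    (ha : ∀ m n, a m * a n ≤ a (m + n)) {M : ℕ} (hM : 0 < M) {F : ℝ}
    (hF : ∀ᶠ j in atTop, exp (F * (M * j : ℕ)) ≤ a (M * j)) {F' : ℝ} (hF' : F' < F) :
    ∀ᶠ m in atTop ⊓ 𝓟 {m | a m ≠ 0}, F' < log (a m) / m := by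
  have hres : ∀ ρ ∈ range M, ∀ᶠ m in atTop, m % M = ρ → a m ≠ 0 → F' < log (a m) / m := by
    intro ρ _
    by_cases h : ∃ r, a r ≠ 0 ∧ r % M = ρ
    · obtain ⟨r, hr, rfl⟩ := h
      filter_upwards [eventually_lt_log_div_of_modEq ha₀ ha hF hF' hr] with m hm hmod _
      exact hm hmod
    · exact Eventually.of_forall fun m hmod ham => (h ⟨m, ham, hmod⟩).elim
  rw [eventually_inf_principal]
  filter_upwards [(eventually_all_finset _).2 hres] with m hm ham
  exact hm (m % M) (mem_range.2 (Nat.mod_lt m hM)) rfl ham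

namespace MvPolynomial

section

variable {σ : Type*} {P : MvPolynomial σ ℝ}

theorem coeff_pow_nonneg (hP : ∀ μ, 0 ≤ P.coeff μ) (n : ℕ) (μ : σ →₀ ℕ) :
    0 ≤ (P ^ n).coeff μ := by
  classical
  induction n generalizing μ with
  | zero => rw [pow_zero, coeff_one]; split_ifs <;> norm_num
  | succ n ih => rw [pow_succ, coeff_mul]; exact sum_nonneg fun x _ => mul_nonneg (ih _) (hP _)

theorem coeff_pow_mul_coeff_pow_le (hP : ∀ μ, 0 ≤ P.coeff μ) (m n : ℕ) (μ ν : σ →₀ ℕ) :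
    (P ^ m).coeff μ * (P ^ n).coeff ν ≤ (P ^ (m + n)).coeff (μ + ν) := by
  classical
  rw [pow_add, coeff_mul]
  have hmem : (μ, ν) ∈ antidiagonal (μ + ν) := mem_antidiagonal.2 rfl
  exact single_le_sum (f := fun x => (P ^ m).coeff x.1 * (P ^ n).coeff x.2)
    (fun x _ => mul_nonneg (coeff_pow_nonneg hP m _) (coeff_pow_nonneg hP n _)) hmem

theorem sum_support_monomial (P : MvPolynomial σ ℝ) :
    ∑ μ : P.support, monomial (μ : σ →₀ ℕ) (P.coeff μ) = P :=
  (sum_coe_sort P.support _).trans P.as_sum.symm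

theorem multinomial_mul_prod_pow_le_coeff_pow {ι : Type*} [Fintype ι]
    (e : ι → σ →₀ ℕ) {c : ι → ℝ} (hc : ∀ i, 0 ≤ c i) (κ : ι → ℕ) :
    Nat.multinomial univ κ * ∏ i, c i ^ κ i ≤
      ((∑ i, monomial (e i) (c i)) ^ ∑ i, κ i).coeff (∑ i, κ i • e i) := by
  classical
  have hterm : ∀ κ' : ι → ℕ, (Nat.multinomial univ κ' : MvPolynomial σ ℝ) *
      ∏ i, monomial (e i) (c i) ^ κ' i =
        monomial (∑ i, κ' i • e i) (Nat.multinomial univ κ' * ∏ i, c i ^ κ' i) := by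
    intro κ'
    simp only [monomial_pow, ← monomial_sum_prod, ← C_mul_monomial, map_natCast]
  rw [sum_pow_eq_sum_piAntidiag, coeff_sum]
  simp only [hterm, coeff_monomial]
  refine le_trans (le_of_eq ?_) (single_le_sum (fun κ' _ => ?_) (mem_piAntidiag.2 ⟨rfl, by simp⟩))
  · simp
  · split_ifs
    · exact mul_nonneg (Nat.cast_nonneg _) (prod_nonneg fun i _ => pow_nonneg (hc i) _)
    · exact le_rfl

theorem exp_weightedEntropy_le_coeff_pow {ι : Type*} [Fintype ι]
    (e : ι → σ →₀ ℕ) {c : ι → ℝ} (hc : ∀ i, 0 < c i) (κ : ι → ℕ) {n : ℕ} (hn : ∑ i, κ i = n) :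
    exp (n * weightedEntropy c (fun i => κ i / n) - Fintype.card ι * (log n / 2 + 1)) ≤
      ((∑ i, monomial (e i) (c i)) ^ n).coeff (∑ i, κ i • e i) := by
  have hmul : (0 : ℝ) < Nat.multinomial univ κ := by exact_mod_cast Nat.multinomial_pos _ _
  have hprod : 0 < ∏ i, c i ^ κ i := prod_pos fun i _ => pow_pos (hc i) _
  refine le_trans ?_ (hn ▸ multinomial_mul_prod_pow_le_coeff_pow e (fun i => (hc i).le) κ)
  rw [← exp_log (mul_pos hmul hprod), exp_le_exp, log_mul hmul.ne' hprod.ne',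
    log_prod fun i _ => (pow_pos (hc i) _).ne', natCast_mul_weightedEntropy c κ hn]
  simp_rw [log_pow]
  linarith [le_log_multinomial κ hn]

theorem exp_weightedEntropy_le_coeff_pow_smul (hP : ∀ μ, 0 ≤ P.coeff μ) (ν : σ →₀ ℕ)
    {q D : ℕ} (hq : 0 < q) (w : P.support → ℕ) (hw : ∑ μ, w μ = D)
    (hwν : ∀ k, q * ∑ μ, w μ * (μ : σ →₀ ℕ) k = D * ν k) {j : ℕ} (hj : 0 < j) :
    exp ((q * (D * j) : ℕ) * weightedEntropy (fun μ : P.support => P.coeff μ) (fun μ => w μ / D)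
        - Fintype.card P.support * (log (q * (D * j) : ℕ) / 2 + 1)) ≤
      (P ^ (q * (D * j))).coeff ((D * j) • ν) := by
  have hκ : ∑ μ, j * (q * w μ) = q * (D * j) := by rw [← mul_sum, ← mul_sum, hw]; ring
  have hexp : ∑ μ : P.support, (j * (q * w μ)) • (μ : σ →₀ ℕ) = (D * j) • ν := by
    ext k
    simp only [Finsupp.coe_finsetSum, Finset.sum_apply, Finsupp.smul_apply, smul_eq_mul]
    rw [show D * j * ν k = j * (q * ∑ μ, w μ * (μ : σ →₀ ℕ) k) by rw [hwν]; ring, mul_sum,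
      mul_sum]
    exact sum_congr rfl fun μ _ => by ring
  have hdiv : (fun μ => ((j * (q * w μ) : ℕ) : ℝ) / (q * (D * j) : ℕ)) =
      fun μ => (w μ : ℝ) / D := by
    funext μ
    have hqj : (0 : ℝ) < q * j := by positivity
    push_cast
    rw [show (j : ℝ) * (q * w μ) = q * j * w μ by ring,
      show (q : ℝ) * (D * j) = q * j * D by ring, mul_div_mul_left _ _ hqj.ne']
  have h := exp_weightedEntropy_le_coeff_pow (fun μ : P.support => (μ : σ →₀ ℕ))
    (fun μ => (hP μ).lt_of_ne' (mem_support_iff.1 μ.2)) (fun μ => j * (q * w μ)) hκ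
  rwa [sum_support_monomial, hexp, hdiv] at h

end

variable {σ : Type*} [Fintype σ] {P : MvPolynomial σ ℝ}

theorem coeff_mul_prod_pow_le_eval (hP : ∀ μ, 0 ≤ P.coeff μ) {z : σ → ℝ}
    (hz : ∀ j, 0 ≤ z j) (μ : σ →₀ ℕ) : P.coeff μ * ∏ j, z j ^ μ j ≤ eval z P := by
  have hterm : ∀ ν, 0 ≤ P.coeff ν * ∏ j, z j ^ ν j :=
    fun ν => mul_nonneg (hP ν) (prod_nonneg fun j _ => pow_nonneg (hz j) _)
  rw [eval_eq']
  by_cases hμ : μ ∈ P.support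
  · exact single_le_sum (f := fun ν => P.coeff ν * ∏ j, z j ^ ν j) (fun ν _ => hterm ν) hμ
  · rw [notMem_support_iff.1 hμ, zero_mul]
    exact sum_nonneg fun ν _ => hterm ν

theorem eval_pos (hP : ∀ μ, 0 ≤ P.coeff μ) (hP0 : P ≠ 0) {z : σ → ℝ} (hz : ∀ j, 0 < z j) :
    0 < eval z P := by
  obtain ⟨μ, hμ⟩ := ne_zero_iff.1 hP0
  exact (mul_pos ((hP μ).lt_of_ne' hμ) (prod_pos fun j _ => pow_pos (hz j) _)).trans_le
    (coeff_mul_prod_pow_le_eval hP (fun j => (hz j).le) μ)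

theorem log_coeff_pow_le (hP : ∀ μ, 0 ≤ P.coeff μ) {z : σ → ℝ} (hz : ∀ j, 0 < z j) {n : ℕ}
    {μ : σ →₀ ℕ} (hμ : (P ^ n).coeff μ ≠ 0) :
    log ((P ^ n).coeff μ) ≤ n * log (eval z P) - ∑ j, μ j * log (z j) := by
  have hcoeff : 0 < (P ^ n).coeff μ := (coeff_pow_nonneg hP n μ).lt_of_ne' hμ
  have hprod : 0 < ∏ j, z j ^ μ j := prod_pos fun j _ => pow_pos (hz j) _
  have h := log_le_log (mul_pos hcoeff hprod)
    (coeff_mul_prod_pow_le_eval (coeff_pow_nonneg hP n) (fun j => (hz j).le) μ)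
  rw [map_pow, log_pow, log_mul hcoeff.ne' hprod.ne',
    log_prod fun j _ => (pow_pos (hz j) _).ne'] at h
  simp only [log_pow] at h
  linarith

theorem mul_eval_pderiv (z : σ → ℝ) (j : σ) (P : MvPolynomial σ ℝ) :
    z j * eval z (pderiv j P) = ∑ μ ∈ P.support, μ j * (P.coeff μ * ∏ i, z i ^ μ i) := by
  have h : X j * pderiv j P = ∑ μ ∈ P.support, μ j • monomial μ (P.coeff μ) := by
    conv_lhs => rw [P.as_sum]
    rw [map_sum, mul_sum]
    exact sum_congr rfl fun μ _ => X_mul_pderiv_monomial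
  simpa [eval_monomial, Finsupp.prod_fintype] using congrArg (eval z) h

noncomputable def tilt (P : MvPolynomial σ ℝ) (z : σ → ℝ) (μ : P.support) : ℝ :=
  P.coeff μ * (∏ j, z j ^ (μ : σ →₀ ℕ) j) / eval z P

theorem sum_tilt {z : σ → ℝ} (hP : eval z P ≠ 0) : ∑ μ, P.tilt z μ = 1 := by
  simp only [tilt, ← sum_div]
  rw [sum_coe_sort P.support fun μ => P.coeff μ * ∏ j, z j ^ μ j, ← eval_eq', div_self hP]

theorem sum_tilt_mul (z : σ → ℝ) (j : σ) :
    ∑ μ, P.tilt z μ * (μ : σ →₀ ℕ) j = z j * eval z (pderiv j P) / eval z P := by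
  rw [mul_eval_pderiv, sum_div,
    ← sum_coe_sort P.support fun μ => μ j * (P.coeff μ * ∏ i, z i ^ μ i) / eval z P]
  refine sum_congr rfl fun μ _ => ?_
  rw [tilt]
  ring

theorem tilt_pos (hP : ∀ μ, 0 ≤ P.coeff μ) {z : σ → ℝ} (hz : ∀ j, 0 < z j) (hE : 0 < eval z P)
    (μ : P.support) : 0 < P.tilt z μ :=
  div_pos (mul_pos ((hP μ).lt_of_ne' (mem_support_iff.1 μ.2))
    (prod_pos fun j _ => pow_pos (hz j) _)) hE

theorem weightedEntropy_tilt (hP : ∀ μ, 0 ≤ P.coeff μ) {z : σ → ℝ} (hz : ∀ j, 0 < z j)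
    (hE : 0 < eval z P) :
    weightedEntropy (fun μ : P.support => P.coeff μ) (P.tilt z) =
      log (eval z P) - ∑ j, z j * eval z (pderiv j P) / eval z P * log (z j) := by
  have hterm : ∀ μ : P.support, negMulLog (P.tilt z μ) + P.tilt z μ * log (P.coeff μ) =
      P.tilt z μ * log (eval z P) - ∑ j, P.tilt z μ * (μ : σ →₀ ℕ) j * log (z j) := by
    intro μ
    have hc : 0 < P.coeff μ := (hP μ).lt_of_ne' (mem_support_iff.1 μ.2)
    have hprod : 0 < ∏ j, z j ^ (μ : σ →₀ ℕ) j := prod_pos fun j _ => pow_pos (hz j) _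
    have hlog : log (P.tilt z μ) =
        log (P.coeff μ) + ∑ j, (μ : σ →₀ ℕ) j * log (z j) - log (eval z P) := by
      rw [tilt, log_div (mul_pos hc hprod).ne' hE.ne', log_mul hc.ne' hprod.ne',
        log_prod fun j _ => (pow_pos (hz j) _).ne']
      simp only [log_pow]
    simp only [mul_assoc, ← mul_sum]
    rw [negMulLog, hlog]
    ring
  rw [weightedEntropy, sum_congr rfl fun μ _ => hterm μ, sum_sub_distrib, ← sum_mul,
    sum_tilt hE.ne', sum_comm]
  simp only [← sum_mul, sum_tilt_mul]
  ring

theorem exists_nat_weights_lt_weightedEntropy (hP : ∀ μ, 0 ≤ P.coeff μ) (hP0 : P ≠ 0)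
    {z : σ → ℝ} (hz : ∀ j, 0 < z j) (ν : σ →₀ ℕ) {q : ℕ} (hq : 0 < q)
    (hν : ∀ j, z j * eval z (pderiv j P) / eval z P = ν j / q) {F : ℝ}
    (hF : F < log (eval z P) - ∑ j, ν j / q * log (z j)) :
    ∃ D : ℕ, 0 < D ∧ ∃ w : P.support → ℕ, ∑ μ, w μ = D ∧
      (∀ k, q * ∑ μ, w μ * (μ : σ →₀ ℕ) k = D * ν k) ∧
      F < weightedEntropy (fun μ : P.support => P.coeff μ) (fun μ => w μ / D) := by
  have hE := eval_pos hP hP0 hz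
  have hentropy : weightedEntropy (fun μ : P.support => P.coeff μ) (P.tilt z) =
      log (eval z P) - ∑ j, ν j / q * log (z j) := by
    simp only [weightedEntropy_tilt hP hz hE, hν]
  have hnear : ∀ᶠ x in 𝓝 (P.tilt z),
      (∀ μ, 0 < x μ) ∧ F < weightedEntropy (fun μ : P.support => P.coeff μ) x :=
    (eventually_all.2 fun μ => (continuous_apply μ).continuousAt.eventually
      (lt_mem_nhds (tilt_pos hP hz hE μ))).and
    ((continuous_weightedEntropy _).continuousAt.eventually (lt_mem_nhds (hentropy ▸ hF)))
  obtain ⟨s, hs1, hsν, hspos, hsF⟩ := exists_rat_sum_eq_one_near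
    (fun μ : P.support => ⇑(μ : σ →₀ ℕ)) (fun j => (ν j / q : ℚ)) (sum_tilt hE.ne')
    (fun j => by rw [sum_tilt_mul, hν]; push_cast; rfl) hnear
  obtain ⟨D, hD, w, hw⟩ := exists_natCast_eq_mul_of_nonneg s fun μ =>
    Rat.cast_nonneg.1 (hspos μ).le
  refine ⟨D, hD, w, ?_, fun k => ?_, ?_⟩
  · have h : ((∑ μ, w μ : ℕ) : ℚ) = D := by
      push_cast
      simp_rw [hw]
      rw [← mul_sum, hs1, mul_one]
    exact_mod_cast h
  · have h : ((q * ∑ μ, w μ * (μ : σ →₀ ℕ) k : ℕ) : ℚ) = (D * ν k : ℕ) := by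
      push_cast
      simp_rw [hw, mul_assoc, ← mul_sum, hsν k]
      field_simp
    exact_mod_cast h
  · convert hsF using 2
    funext μ
    rw [show (w μ : ℝ) = D * s μ by exact_mod_cast hw μ]
    field_simp

theorem eventually_lt_log_coeff_pow (hP : ∀ μ, 0 ≤ P.coeff μ) (hP0 : P ≠ 0) {z : σ → ℝ}
    (hz : ∀ j, 0 < z j) (ν : σ →₀ ℕ) {q : ℕ} (hq : 0 < q)
    (hν : ∀ j, z j * eval z (pderiv j P) / eval z P = ν j / q) {L' : ℝ}
    (hL' : L' < log (eval z P) - ∑ j, ν j / q * log (z j)) :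
    ∀ᶠ m : ℕ in atTop ⊓ 𝓟 {m | (P ^ (q * m)).coeff (m • ν) ≠ 0},
      L' < 1 / ((q : ℝ) * m) * log ((P ^ (q * m)).coeff (m • ν)) := by
  obtain ⟨F₂, hF₂, hF₂L⟩ := exists_between hL'
  obtain ⟨F₁, hF₁, hF₁₂⟩ := exists_between hF₂
  obtain ⟨D, hD, w, hw, hwν, hwF⟩ := exists_nat_weights_lt_weightedEntropy hP hP0 hz ν hq hν hF₂L
  set a : ℕ → ℝ := fun m => (P ^ (q * m)).coeff (m • ν)
  have hlevel : ∀ᶠ j in atTop, exp (q * F₁ * (D * j : ℕ)) ≤ a (D * j) := by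
    have hn : Tendsto (fun j => q * (D * j)) atTop atTop :=
      tendsto_atTop_mono
        (fun j => (Nat.le_mul_of_pos_left j hD).trans (Nat.le_mul_of_pos_left _ hq)) tendsto_id
    filter_upwards [hn.eventually (eventually_mul_log_add_le (Fintype.card P.support)
      (sub_pos.2 (hF₁₂.trans hwF))), eventually_gt_atTop 0] with j hj hj0
    refine le_trans ?_ (exp_weightedEntropy_le_coeff_pow_smul hP ν hq w hw hwν hj0)
    rw [exp_le_exp]
    push_cast at hj ⊢
    nlinarith
  have hsuper : ∀ m n, a m * a n ≤ a (m + n) := fun m n => by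
    simpa [a, mul_add, add_smul] using
      coeff_pow_mul_coeff_pow_le hP (q * m) (q * n) (m • ν) (n • ν)
  filter_upwards [eventually_lt_log_div (fun m => coeff_pow_nonneg hP _ _) hsuper hD hlevel
    (mul_lt_mul_of_pos_left hF₁ (by positivity : (0 : ℝ) < q))] with m hm
  rw [show 1 / ((q : ℝ) * m) * log (a m) = log (a m) / m / q by ring, lt_div_iff₀ (by positivity)]
  linarith

theorem tendsto_log_coeff_pow (hP : ∀ μ, 0 ≤ P.coeff μ) {z : σ → ℝ} (hz : ∀ j, 0 < z j)
    (ν : σ →₀ ℕ) {q : ℕ} (hq : 0 < q)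
    (hν : ∀ j, z j * eval z (pderiv j P) / eval z P = ν j / q) :
    Tendsto (fun m : ℕ => 1 / ((q : ℝ) * m) * log ((P ^ (q * m)).coeff (m • ν)))
      (atTop ⊓ 𝓟 {m | (P ^ (q * m)).coeff (m • ν) ≠ 0})
      (𝓝 (log (eval z P) - ∑ j, ν j / q * log (z j))) := by
  rcases eq_or_ne P 0 with rfl | hP0
  · convert tendsto_bot
    rw [inf_principal_eq_bot]
    filter_upwards [eventually_gt_atTop 0] with m hm
    simp [zero_pow (Nat.mul_pos hq hm).ne']
  refine tendsto_order.2 ⟨fun L' hL' => eventually_lt_log_coeff_pow hP hP0 hz ν hq hν hL',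
    fun L' hL' => ?_⟩
  rw [eventually_inf_principal]
  filter_upwards [eventually_gt_atTop 0] with m hm hcoeff
  refine lt_of_le_of_lt ?_ hL'
  have h := log_coeff_pow_le hP hz hcoeff
  have hsum : ∑ j, ((m • ν) j : ℝ) * log (z j) = q * m * ∑ j, ν j / q * log (z j) := by
    rw [mul_sum]
    refine sum_congr rfl fun j _ => ?_
    simp only [Finsupp.smul_apply, smul_eq_mul, Nat.cast_mul]
    field_simp
  rw [hsum] at h
  rw [div_mul_eq_mul_div, one_mul, div_le_iff₀ (by positivity)]
  push_cast at h
  linarith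

end MvPolynomial

theorem coeff_Bmv_nonneg {k c d : ℕ} {b : ℕ → ℕ → ℝ} (hb : ∀ u v, 0 ≤ b u v)
    (μ : Fin 2 →₀ ℕ) : 0 ≤ (Bmv k c d b).coeff μ := by
  simp only [Bmv, MvPolynomial.coeff_add, MvPolynomial.coeff_one, MvPolynomial.coeff_sum,
    MvPolynomial.coeff_monomial]
  refine add_nonneg (by split_ifs <;> norm_num) (sum_nonneg fun u _ => sum_nonneg fun v _ => ?_)
  split_ifs
  exacts [hb u v, le_rfl]

theorem stmt_13_general (k c d : ℕ)
    (b : ℕ → ℕ → ℝ) (hbnn : ∀ u v, 0 ≤ b u v)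
    (p₁ p₂ q' : ℕ) (hq' : 0 < q')
    (ξ θ : ℝ) (hξ : ξ = (p₁ : ℝ) / q') (hθ : θ = (p₂ : ℝ) / q')
    (x₀ y₀ : ℝ) (hx₀ : 0 < x₀) (hy₀ : 0 < y₀)
    (hsx : x₀ * MvPolynomial.eval ![x₀, y₀] (MvPolynomial.pderiv (0 : Fin 2) (Bmv k c d b))
        / MvPolynomial.eval ![x₀, y₀] (Bmv k c d b) = ξ)
    (hsy : y₀ * MvPolynomial.eval ![x₀, y₀] (MvPolynomial.pderiv (1 : Fin 2) (Bmv k c d b))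
        / MvPolynomial.eval ![x₀, y₀] (Bmv k c d b) = θ) :
    Filter.Tendsto
      (fun m : ℕ => (1 / ((q' : ℝ) * m)) *
        Real.log (MvPolynomial.coeff
          (Finsupp.single (0 : Fin 2) (p₁ * m) + Finsupp.single (1 : Fin 2) (p₂ * m))
          (Bmv k c d b ^ (q' * m))))
      (Filter.atTop ⊓ Filter.principal
        {m : ℕ | MvPolynomial.coeff
          (Finsupp.single (0 : Fin 2) (p₁ * m) + Finsupp.single (1 : Fin 2) (p₂ * m))
          (Bmv k c d b ^ (q' * m)) ≠ 0})
      (𝓝 (Real.log (MvPolynomial.eval ![x₀, y₀] (Bmv k c d b))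
            - ξ * Real.log x₀ - θ * Real.log y₀)) := by
  have hsmul : ∀ m : ℕ, m • (Finsupp.single 0 p₁ + Finsupp.single 1 p₂ : Fin 2 →₀ ℕ) =
      Finsupp.single 0 (p₁ * m) + Finsupp.single 1 (p₂ * m) := fun m => by
    simp [smul_add, mul_comm]
  have hz : ∀ j, 0 < ![x₀, y₀] j := fun j => by fin_cases j <;> simpa
  have h := MvPolynomial.tendsto_log_coeff_pow (coeff_Bmv_nonneg (k := k) (c := c) (d := d) hbnn)
    hz (Finsupp.single 0 p₁ + Finsupp.single 1 p₂) hq' fun j => by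
      fin_cases j
      · simpa [hξ] using hsx
      · simpa [hθ] using hsy
  simp only [hsmul] at h
  convert h using 2
  simp [Fin.sum_univ_two, hξ, hθ, sub_sub]

/-- two-dimensional Hayman-type coefficient asymptotics.  With
`ξ = p₁/q′`, `θ = p₂/q′`, suppose `x₀, y₀ > 0` satisfy
`x₀ ∂B/∂x(x₀,y₀)/B(x₀,y₀) = ξ` and `y₀ ∂B/∂y(x₀,y₀)/B(x₀,y₀) = θ`.  Then, along those `m`
for which the coefficient of `x^{p₁m} y^{p₂m}` in `B(x,y)^{q′m}` is nonzero,
`(1/(q′m)) log Coeff[B^{q′m}, x^{p₁m} y^{p₂m}] → log B(x₀,y₀) − ξ log x₀ − θ log y₀`. -/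
theorem stmt_13 (k c d : ℕ) (hk : 1 ≤ k) (hc : 1 ≤ c) (hcd : c ≤ d)
    (b : ℕ → ℕ → ℝ) (hbnn : ∀ u v, 0 ≤ b u v)
    (hbne : ∃ u ∈ Finset.Icc 1 k, ∃ v ∈ Finset.Icc c d, b u v ≠ 0)
    (p₁ p₂ q' : ℕ) (hp₁ : 0 < p₁) (hp₂ : 0 < p₂) (hq' : 0 < q')
    (ξ θ : ℝ) (hξ : ξ = (p₁ : ℝ) / q') (hθ : θ = (p₂ : ℝ) / q')
    (x₀ y₀ : ℝ) (hx₀ : 0 < x₀) (hy₀ : 0 < y₀)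
    (hsx : x₀ * MvPolynomial.eval ![x₀, y₀] (MvPolynomial.pderiv (0 : Fin 2) (Bmv k c d b))
        / MvPolynomial.eval ![x₀, y₀] (Bmv k c d b) = ξ)
    (hsy : y₀ * MvPolynomial.eval ![x₀, y₀] (MvPolynomial.pderiv (1 : Fin 2) (Bmv k c d b))
        / MvPolynomial.eval ![x₀, y₀] (Bmv k c d b) = θ) :
    Filter.Tendsto
      (fun m : ℕ => (1 / ((q' : ℝ) * m)) *
        Real.log (MvPolynomial.coeff
          (Finsupp.single (0 : Fin 2) (p₁ * m) + Finsupp.single (1 : Fin 2) (p₂ * m))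
          (Bmv k c d b ^ (q' * m))))
      (Filter.atTop ⊓ Filter.principal
        {m : ℕ | MvPolynomial.coeff
          (Finsupp.single (0 : Fin 2) (p₁ * m) + Finsupp.single (1 : Fin 2) (p₂ * m))
          (Bmv k c d b ^ (q' * m)) ≠ 0})
      (𝓝 (Real.log (MvPolynomial.eval ![x₀, y₀] (Bmv k c d b))
            - ξ * Real.log x₀ - θ * Real.log y₀)) :=
  stmt_13_general k c d b hbnn p₁ p₂ q' hq' ξ θ hξ hθ x₀ y₀ hx₀ hy₀ hsx hsy
end

section
/- Suppose ε₀ > 0 and x₀, y₀, β : (0, ε₀) → (0,∞) are functions such that, for every α ∈ (0, ε₀), x₀(α) Σ_{t∈I_v} δ_t ∂_xB_t(x₀(α),y₀(α))/B_t(x₀(α),y₀(α)) = α and y₀(α) Σ_{t∈I_v} δ_t ∂_yB_t(x₀(α),y₀(α))/B_t(x₀(α),y₀(α)) = β(α). Then β(α) → 0 as α → 0⁺. -/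
open Finset Filter Real Topology

lemma mul_natCast_mul_pow_sub_one (x : ℝ) (n : ℕ) : x * (n * x ^ (n - 1)) = n * x ^ n := by
  rcases n with _ | n
  · simp
  · rw [mul_left_comm, Nat.add_sub_cancel, ← pow_succ']

lemma nodefrac_nonneg {ι : Type*} [Fintype ι] {w : ι → ℝ} (hw : ∀ t, 0 ≤ w t) (n : ι → ℕ)
    (t : ι) : 0 ≤ nodefrac w n t :=
  div_nonneg (hw t) <| mul_nonneg (n t).cast_nonneg <|
    sum_nonneg fun s _ => div_nonneg (hw s) (n s).cast_nonneg

section BIcc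

variable {ι : Type*} (k p q : ι → ℕ) (b : ι → ℕ → ℕ → ℝ)

lemma mul_deriv_BIcc_fst (t : ι) (x y : ℝ) :
    x * deriv (fun x => BIcc k p q b t x y) x
      = ∑ u ∈ Icc 1 (k t), ∑ v ∈ Icc (p t) (q t), u * (b t u v * x ^ u * y ^ v) := by
  have hB : HasDerivAt (fun x => BIcc k p q b t x y)
      (∑ u ∈ Icc 1 (k t), ∑ v ∈ Icc (p t) (q t), b t u v * (u * x ^ (u - 1)) * y ^ v) x :=
    (HasDerivAt.fun_sum fun u _ => HasDerivAt.fun_sum fun v _ =>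
      ((hasDerivAt_pow u x).const_mul (b t u v)).mul_const (y ^ v)).const_add 1
  rw [hB.deriv, mul_sum]
  refine sum_congr rfl fun u _ => ?_
  rw [mul_sum]
  refine sum_congr rfl fun v _ => ?_
  linear_combination b t u v * y ^ v * mul_natCast_mul_pow_sub_one x u

lemma mul_deriv_BIcc_snd (t : ι) (x y : ℝ) :
    y * deriv (fun y => BIcc k p q b t x y) y
      = ∑ u ∈ Icc 1 (k t), ∑ v ∈ Icc (p t) (q t), v * (b t u v * x ^ u * y ^ v) := by
  have hB : HasDerivAt (fun y => BIcc k p q b t x y)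
      (∑ u ∈ Icc 1 (k t), ∑ v ∈ Icc (p t) (q t), b t u v * x ^ u * (v * y ^ (v - 1))) y :=
    (HasDerivAt.fun_sum fun u _ => HasDerivAt.fun_sum fun v _ =>
      (hasDerivAt_pow v y).const_mul (b t u v * x ^ u)).const_add 1
  rw [hB.deriv, mul_sum]
  refine sum_congr rfl fun u _ => ?_
  rw [mul_sum]
  refine sum_congr rfl fun v _ => ?_
  linear_combination b t u v * x ^ u * mul_natCast_mul_pow_sub_one y v

variable {b}

lemma one_le_BIcc (t : ι) (hb : ∀ u v, 0 ≤ b t u v) {x y : ℝ} (hx : 0 ≤ x) (hy : 0 ≤ y) :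
    1 ≤ BIcc k p q b t x y :=
  le_add_of_nonneg_right <| sum_nonneg fun u _ => sum_nonneg fun v _ => by
    have := hb u v; positivity

lemma mul_deriv_BIcc_snd_le (t : ι) (hb : ∀ u v, 0 ≤ b t u v) {Q : ℝ} (hQ : (q t : ℝ) ≤ Q)
    {x y : ℝ} (hx : 0 ≤ x) (hy : 0 ≤ y) :
    y * deriv (fun y => BIcc k p q b t x y) y
      ≤ Q * (x * deriv (fun x => BIcc k p q b t x y) x) := by
  rw [mul_deriv_BIcc_snd, mul_deriv_BIcc_fst, mul_sum]
  refine sum_le_sum fun u hu => ?_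
  rw [mul_sum]
  refine sum_le_sum fun v hv => ?_
  have hu : (1 : ℝ) ≤ u := by exact_mod_cast (mem_Icc.mp hu).1
  have hv : (v : ℝ) ≤ Q := le_trans (by exact_mod_cast (mem_Icc.mp hv).2) hQ
  have hm : 0 ≤ b t u v * x ^ u * y ^ v := by have := hb u v; positivity
  calc (v : ℝ) * (b t u v * x ^ u * y ^ v) ≤ Q * u * (b t u v * x ^ u * y ^ v) := by
        gcongr; nlinarith
    _ = Q * (u * (b t u v * x ^ u * y ^ v)) := by ring

lemma mul_sum_deriv_BIcc_snd_le [Fintype ι] (hb : ∀ t u v, 0 ≤ b t u v) {w : ι → ℝ}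
    (hw : ∀ t, 0 ≤ w t) {Q : ℝ} (hQ : ∀ t, (q t : ℝ) ≤ Q) {x y : ℝ} (hx : 0 ≤ x)
    (hy : 0 ≤ y) :
    y * ∑ t, w t * deriv (fun y => BIcc k p q b t x y) y / BIcc k p q b t x y
      ≤ Q * (x * ∑ t, w t * deriv (fun x => BIcc k p q b t x y) x / BIcc k p q b t x y) := by
  rw [mul_sum, mul_sum, mul_sum]
  refine sum_le_sum fun t _ => ?_
  have hB := one_le_BIcc k p q t (hb t) hx hy
  have hwB : 0 ≤ w t / BIcc k p q b t x y := div_nonneg (hw t) (by linarith)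
  convert mul_le_mul_of_nonneg_left
    (mul_deriv_BIcc_snd_le k p q t (hb t) (hQ t) hx hy) hwB using 1 <;> ring

end BIcc

theorem stmt_15_general {ι : Type*} [Fintype ι]
    (k p q : ι → ℕ)
    (b : ι → ℕ → ℕ → ℝ) (hbnn : ∀ t u v, 0 ≤ b t u v)
    (lam : ι → ℝ) (hlam : ∀ t, 0 < lam t)
    (ε₀ : ℝ) (hε₀ : 0 < ε₀)
    (x₀ y₀ β : ℝ → ℝ)
    (hpos : ∀ α ∈ Set.Ioo 0 ε₀, 0 < x₀ α ∧ 0 < y₀ α ∧ 0 < β α)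
    (hE2 : ∀ α ∈ Set.Ioo 0 ε₀,
      x₀ α * ∑ t, nodefrac lam q t *
        deriv (fun x => BIcc k p q b t x (y₀ α)) (x₀ α) / BIcc k p q b t (x₀ α) (y₀ α) = α)
    (hE3 : ∀ α ∈ Set.Ioo 0 ε₀,
      y₀ α * ∑ t, nodefrac lam q t *
        deriv (fun y => BIcc k p q b t (x₀ α) y) (y₀ α) / BIcc k p q b t (x₀ α) (y₀ α)
          = β α) :
    Filter.Tendsto β (nhdsWithin 0 (Set.Ioi 0)) (𝓝 0) := by
  set Q : ℝ := ((univ.sup q : ℕ) : ℝ)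
  have hβ_le : ∀ α ∈ Set.Ioo 0 ε₀, β α ≤ Q * α := by
    intro α hα
    obtain ⟨hx, hy, -⟩ := hpos α hα
    have := mul_sum_deriv_BIcc_snd_le k p q hbnn (nodefrac_nonneg (fun t => (hlam t).le) q)
      (fun t => Nat.cast_le.mpr (le_sup (mem_univ t))) hx.le hy.le
    rwa [hE2 α hα, hE3 α hα] at this
  have hmem : Set.Ioo 0 ε₀ ∈ 𝓝[>] (0 : ℝ) := Ioo_mem_nhdsGT hε₀
  refine squeeze_zero' (eventually_of_mem hmem fun α hα => (hpos α hα).2.2.le)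
    (eventually_of_mem hmem hβ_le) ?_
  simpa using ((continuous_const_mul Q).tendsto 0).mono_left nhdsWithin_le_nhds

/-- if positive functions `x₀, y₀, β` on `(0,ε₀)` satisfy
`x₀ ∑_t δ_t ∂_xB_t/B_t = α` and `y₀ ∑_t δ_t ∂_yB_t/B_t = β`, then `β(α) → 0` as `α → 0⁺`. -/
theorem stmt_15 {ι : Type*} [Fintype ι] [Nonempty ι]
    (k p q : ι → ℕ) (hk : ∀ t, 1 ≤ k t) (hp : ∀ t, 2 ≤ p t) (hpq : ∀ t, p t ≤ q t)
    (b : ι → ℕ → ℕ → ℝ) (hbnn : ∀ t u v, 0 ≤ b t u v)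
    (hbne : ∀ t, ∃ u ∈ Finset.Icc 1 (k t), ∃ v ∈ Finset.Icc (p t) (q t), b t u v ≠ 0)
    (lam : ι → ℝ) (hlam : ∀ t, 0 < lam t) (hlam1 : ∑ t, lam t = 1)
    (ε₀ : ℝ) (hε₀ : 0 < ε₀)
    (x₀ y₀ β : ℝ → ℝ)
    (hpos : ∀ α ∈ Set.Ioo 0 ε₀, 0 < x₀ α ∧ 0 < y₀ α ∧ 0 < β α)
    (hE2 : ∀ α ∈ Set.Ioo 0 ε₀,
      x₀ α * ∑ t, nodefrac lam q t *
        deriv (fun x => BIcc k p q b t x (y₀ α)) (x₀ α) / BIcc k p q b t (x₀ α) (y₀ α) = α)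
    (hE3 : ∀ α ∈ Set.Ioo 0 ε₀,
      y₀ α * ∑ t, nodefrac lam q t *
        deriv (fun y => BIcc k p q b t (x₀ α) y) (y₀ α) / BIcc k p q b t (x₀ α) (y₀ α)
          = β α) :
    Filter.Tendsto β (nhdsWithin 0 (Set.Ioi 0)) (𝓝 0) :=
  stmt_15_general k p q b hbnn lam hlam ε₀ hε₀ x₀ y₀ β hpos hE2 hE3
end

section
/- Suppose ε₀ > 0 and z₀, β : (0, ε₀) → (0,∞) are functions such that, for every α ∈ (0, ε₀), z₀(α) (∫ρ/∫λ) Σ_{t∈I_c} γ_t A_t′(z₀(α))/A_t(z₀(α)) = β(α), and assume β(α) → 0 as α → 0⁺. Then z₀(α) → 0 as α → 0⁺, and z₀(α)^r · C / (β(α) · ∫λ) → 1 as α → 0⁺. -/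
open Finset Filter Real Topology

/-- `C = r ∑_{t : r_t = r} ρ_t a_{t,r} / s_t`, where `r = min_t r_t`. -/
noncomputable def Cdef {ι : Type*} [Fintype ι] (rc sc : ι → ℕ) (a : ι → ℕ → ℝ)
    (ρ : ι → ℝ) (rmin : ℕ) : ℝ :=
  rmin * ∑ t ∈ Finset.univ.filter (fun t => rc t = rmin), ρ t * a t rmin / sc t

/-!
Clearing the denominators `s_t ∫ρ` turns the hypothesis into
`β ∫λ = ∑_t (ρ_t/s_t) · z A_t'(z)/A_t(z)` at `z = z₀(α)`. Each summand is at least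
`(ρ_t/s_t)(1 - 1/A_t(z))`, an increasing function of `z` that vanishes only at `0`, so
`β → 0` forces `z₀ → 0`. Dividing `z A_t'(z)` by `z^r` leaves a polynomial (`eulerQuot`), so
the right-hand side is `z^r H(z)` with `H` continuous at `0` and `H(0) = C > 0`; hence
`z₀^r C/(β ∫λ) = C/H(z₀) → 1`.
-/

lemma tendsto_nhds_zero_of_monotoneOn_le {α : Type*} {l : Filter α} {g : ℝ → ℝ} {z b : α → ℝ}
    (hg : MonotoneOn g (Set.Ici 0)) (hg_pos : ∀ x, 0 < x → 0 < g x)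
    (hz : ∀ᶠ x in l, 0 ≤ z x) (hgb : ∀ᶠ x in l, g (z x) ≤ b x) (hb : Tendsto b l (𝓝 0)) :
    Tendsto z l (𝓝 0) := by
  refine tendsto_order.2 ⟨fun ε hε => hz.mono fun x hx => hε.trans_le hx, fun ε hε => ?_⟩
  filter_upwards [hz, hgb, hb.eventually (gt_mem_nhds (hg_pos ε hε))] with x hzx hgx hbx
  by_contra! hεz
  exact (hgx.trans_lt hbx).not_ge (hg hε.le hzx hεz)

section WeightPolynomial

variable {ι : Type*} (r s : ι → ℕ) (a : ι → ℕ → ℝ) (t : ι)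

lemma one_le_AIcc (ha : ∀ u, 0 ≤ a t u) {z : ℝ} (hz : 0 ≤ z) : 1 ≤ AIcc r s a t z :=
  le_add_of_nonneg_right (sum_nonneg fun u _ => mul_nonneg (ha u) (pow_nonneg hz u))

lemma one_lt_AIcc (ha : ∀ u, 0 ≤ a t u) (har : 0 < a t (r t)) (hrs : r t ≤ s t) {z : ℝ}
    (hz : 0 < z) : 1 < AIcc r s a t z :=
  lt_add_of_pos_right _ <| sum_pos' (fun u _ => mul_nonneg (ha u) (pow_nonneg hz.le u))
    ⟨r t, mem_Icc.2 ⟨le_rfl, hrs⟩, mul_pos har (pow_pos hz _)⟩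

lemma AIcc_zero (hr : 0 < r t) : AIcc r s a t 0 = 1 := by
  refine add_eq_left.2 (sum_eq_zero fun u hu => ?_)
  rw [zero_pow (by grind), mul_zero]

lemma monotoneOn_AIcc (ha : ∀ u, 0 ≤ a t u) : MonotoneOn (AIcc r s a t) (Set.Ici 0) :=
  fun _ hy _ _ hyz => add_le_add le_rfl <| sum_le_sum fun u _ =>
    mul_le_mul_of_nonneg_left (pow_le_pow_left₀ hy hyz u) (ha u)

lemma mul_deriv_AIcc (z : ℝ) :
    z * deriv (AIcc r s a t) z = ∑ u ∈ Icc (r t) (s t), u * a t u * z ^ u := by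
  have hA : HasDerivAt (AIcc r s a t) (∑ u ∈ Icc (r t) (s t), a t u * (u * z ^ (u - 1))) z := by
    unfold AIcc
    exact (HasDerivAt.fun_sum fun u _ => (hasDerivAt_pow u z).const_mul (a t u)).const_add 1
  rw [hA.deriv, mul_sum]
  refine sum_congr rfl fun u _ => ?_
  rcases Nat.eq_zero_or_pos u with rfl | hu
  · simp
  · rw [← mul_pow_sub_one hu.ne' z]; ring

lemma AIcc_sub_one_le_mul_deriv (ha : ∀ u, 0 ≤ a t u) (hr : 0 < r t) {z : ℝ} (hz : 0 ≤ z) :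
    AIcc r s a t z - 1 ≤ z * deriv (AIcc r s a t) z := by
  rw [mul_deriv_AIcc, AIcc, add_sub_cancel_left]
  refine sum_le_sum fun u hu => ?_
  have hu1 : (1 : ℝ) ≤ u := by exact_mod_cast hr.trans_le (mem_Icc.1 hu).1
  nlinarith [mul_nonneg (ha u) (pow_nonneg hz u)]

lemma one_sub_inv_AIcc_le (ha : ∀ u, 0 ≤ a t u) (hr : 0 < r t) {z : ℝ} (hz : 0 ≤ z) :
    1 - (AIcc r s a t z)⁻¹ ≤ z * deriv (AIcc r s a t) z / AIcc r s a t z := by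
  have hA : 0 < AIcc r s a t z := one_pos.trans_le (one_le_AIcc r s a t ha hz)
  calc 1 - (AIcc r s a t z)⁻¹ = (AIcc r s a t z - 1) / AIcc r s a t z := by field_simp
    _ ≤ _ := div_le_div_of_nonneg_right (AIcc_sub_one_le_mul_deriv r s a t ha hr hz) hA.le

lemma monotoneOn_one_sub_inv_AIcc (ha : ∀ u, 0 ≤ a t u) :
    MonotoneOn (fun z => 1 - (AIcc r s a t z)⁻¹) (Set.Ici 0) := fun _ hy _ hz hyz =>
  sub_le_sub_left (inv_anti₀ (one_pos.trans_le (one_le_AIcc r s a t ha hy))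
    (monotoneOn_AIcc r s a t ha hy hz hyz)) 1

lemma one_sub_inv_AIcc_pos (ha : ∀ u, 0 ≤ a t u) (har : 0 < a t (r t)) (hrs : r t ≤ s t)
    {z : ℝ} (hz : 0 < z) : 0 < 1 - (AIcc r s a t z)⁻¹ :=
  sub_pos.2 (inv_lt_one_of_one_lt₀ (one_lt_AIcc r s a t ha har hrs hz))

/-- `z A_t'(z) / z ^ k`, a polynomial in `z` as long as `k ≤ r t`. -/
noncomputable def eulerQuot (k : ℕ) (z : ℝ) : ℝ :=
  ∑ u ∈ Icc (r t) (s t), u * a t u * z ^ (u - k)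

lemma pow_mul_eulerQuot {k : ℕ} (hk : k ≤ r t) (z : ℝ) :
    z ^ k * eulerQuot r s a t k z = z * deriv (AIcc r s a t) z := by
  rw [mul_deriv_AIcc, eulerQuot, mul_sum]
  refine sum_congr rfl fun u hu => ?_
  rw [mul_left_comm, ← pow_add, Nat.add_sub_cancel' (hk.trans (mem_Icc.1 hu).1)]

lemma eulerQuot_zero {k : ℕ} (hk : k ≤ r t) (hrs : r t ≤ s t) :
    eulerQuot r s a t k 0 = if r t = k then k * a t k else 0 := by
  have hterm : ∀ u ∈ Icc (r t) (s t),
      u * a t u * (0 : ℝ) ^ (u - k) = if u = k then k * a t k else 0 := fun u hu => by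
    have := (mem_Icc.1 hu).1
    split_ifs with h
    · simp [h]
    · rw [zero_pow (by omega), mul_zero]
  rw [eulerQuot, sum_congr rfl hterm, sum_ite_eq']
  grind

end WeightPolynomial

section WeightedSum

variable {ι : Type*} [Fintype ι] (rc sc : ι → ℕ) (a : ι → ℕ → ℝ) (ρ : ι → ℝ) (k : ℕ)

noncomputable def weightedEulerQuot (z : ℝ) : ℝ :=
  ∑ t, ρ t / sc t * (eulerQuot rc sc a t k z / AIcc rc sc a t z)

lemma pow_mul_weightedEulerQuot (hk : ∀ t, k ≤ rc t) (z : ℝ) :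
    z ^ k * weightedEulerQuot rc sc a ρ k z
      = ∑ t, ρ t / sc t * (z * deriv (AIcc rc sc a t) z / AIcc rc sc a t z) := by
  rw [weightedEulerQuot, mul_sum]
  refine sum_congr rfl fun t _ => ?_
  rw [← pow_mul_eulerQuot rc sc a t (hk t)]
  ring

lemma mul_intden_mul_sum_nodefrac (hden : intden ρ sc ≠ 0) (L z : ℝ) :
    z * ((intden ρ sc / L) *
        ∑ t, nodefrac ρ sc t * deriv (AIcc rc sc a t) z / AIcc rc sc a t z)
      = (∑ t, ρ t / sc t * (z * deriv (AIcc rc sc a t) z / AIcc rc sc a t z)) / L := by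
  rw [mul_sum, mul_sum, sum_div]
  refine sum_congr rfl fun t _ => ?_
  rw [nodefrac]
  field_simp

lemma le_sum_mul_deriv_div_AIcc (ha : ∀ t u, 0 ≤ a t u) (hr : ∀ t, 0 < rc t)
    (hρ : ∀ t, 0 ≤ ρ t) {z : ℝ} (hz : 0 ≤ z) (t₀ : ι) :
    ρ t₀ / sc t₀ * (1 - (AIcc rc sc a t₀ z)⁻¹)
      ≤ ∑ t, ρ t / sc t * (z * deriv (AIcc rc sc a t) z / AIcc rc sc a t z) := by
  have hterm : ∀ t, ρ t / sc t * (1 - (AIcc rc sc a t z)⁻¹)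
      ≤ ρ t / sc t * (z * deriv (AIcc rc sc a t) z / AIcc rc sc a t z) := fun t =>
    mul_le_mul_of_nonneg_left (one_sub_inv_AIcc_le rc sc a t (ha t) (hr t) hz)
      (div_nonneg (hρ t) (Nat.cast_nonneg _))
  have hnonneg : ∀ t, 0 ≤ ρ t / sc t * (1 - (AIcc rc sc a t z)⁻¹) := fun t =>
    mul_nonneg (div_nonneg (hρ t) (Nat.cast_nonneg _))
      (sub_nonneg.2 (inv_le_one_of_one_le₀ (one_le_AIcc rc sc a t (ha t) hz)))
  exact (hterm t₀).trans <|
    single_le_sum (fun t _ => (hnonneg t).trans (hterm t)) (mem_univ t₀)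

lemma tendsto_nhds_zero_of_sum_mul_deriv_div_AIcc_le [Nonempty ι] {α : Type*} {l : Filter α}
    {z b : α → ℝ} (ha : ∀ t u, 0 ≤ a t u) (har : ∀ t, 0 < a t (rc t)) (hr : ∀ t, 0 < rc t)
    (hrs : ∀ t, rc t ≤ sc t) (hρ : ∀ t, 0 < ρ t) (hz : ∀ᶠ x in l, 0 ≤ z x)
    (hzb : ∀ᶠ x in l,
      ∑ t, ρ t / sc t * (z x * deriv (AIcc rc sc a t) (z x) / AIcc rc sc a t (z x)) ≤ b x)
    (hb : Tendsto b l (𝓝 0)) : Tendsto z l (𝓝 0) := by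
  obtain ⟨t₀⟩ := ‹Nonempty ι›
  have hw : 0 < ρ t₀ / sc t₀ := div_pos (hρ t₀) (by exact_mod_cast (hr t₀).trans_le (hrs t₀))
  refine tendsto_nhds_zero_of_monotoneOn_le
    (g := fun z => ρ t₀ / sc t₀ * (1 - (AIcc rc sc a t₀ z)⁻¹))
    (fun y hy z hz hyz => mul_le_mul_of_nonneg_left
      (monotoneOn_one_sub_inv_AIcc rc sc a t₀ (ha t₀) hy hz hyz) hw.le)
    (fun z hz => mul_pos hw (one_sub_inv_AIcc_pos rc sc a t₀ (ha t₀) (har t₀) (hrs t₀) hz))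
    hz ?_ hb
  filter_upwards [hz, hzb] with x hzx hzbx
  exact (le_sum_mul_deriv_div_AIcc rc sc a ρ ha hr (fun t => (hρ t).le) hzx t₀).trans hzbx

lemma weightedEulerQuot_zero (hr : ∀ t, 0 < rc t) (hrs : ∀ t, rc t ≤ sc t)
    (hk : ∀ t, k ≤ rc t) :
    weightedEulerQuot rc sc a ρ k 0 = Cdef rc sc a ρ k := by
  rw [weightedEulerQuot, Cdef, sum_filter, mul_sum]
  refine sum_congr rfl fun t _ => ?_
  rw [eulerQuot_zero rc sc a t (hk t) (hrs t), AIcc_zero rc sc a t (hr t)]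
  split_ifs <;> ring

lemma continuousAt_weightedEulerQuot (hr : ∀ t, 0 < rc t) :
    ContinuousAt (weightedEulerQuot rc sc a ρ k) 0 := by
  have hA : ∀ t, ContinuousAt (AIcc rc sc a t) 0 := fun t => by unfold AIcc; fun_prop
  have hP : ∀ t, ContinuousAt (eulerQuot rc sc a t k) 0 := fun t => by unfold eulerQuot; fun_prop
  unfold weightedEulerQuot
  exact tendsto_finsetSum _ fun t _ => continuousAt_const.mul <|
    (hP t).div (hA t) (by rw [AIcc_zero rc sc a t (hr t)]; exact one_ne_zero)

lemma Cdef_pos (hsc : ∀ t, 0 < sc t) (har : ∀ t, 0 < a t (rc t)) (hρ : ∀ t, 0 < ρ t)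
    (hk : 0 < k) (hex : ∃ t, rc t = k) : 0 < Cdef rc sc a ρ k := by
  obtain ⟨t₀, ht₀⟩ := hex
  refine mul_pos (by exact_mod_cast hk) (sum_pos (fun t ht => ?_) ⟨t₀, by simpa using ht₀⟩)
  rw [← (mem_filter.1 ht).2]
  have := hsc t
  have := har t
  have := hρ t
  positivity

end WeightedSum

theorem stmt_16_general {ι : Type*} [Fintype ι] [Nonempty ι]
    (rc sc : ι → ℕ) (h2r : ∀ t, 2 ≤ rc t) (hrs : ∀ t, rc t ≤ sc t)
    (a : ι → ℕ → ℝ) (hann : ∀ t u, 0 ≤ a t u) (har : ∀ t, 0 < a t (rc t))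
    (ρ : ι → ℝ) (hρ : ∀ t, 0 < ρ t)
    (intL : ℝ) (hintL : 0 < intL)
    (rmin : ℕ) (hrle : ∀ t, rmin ≤ rc t) (hrex : ∃ t, rc t = rmin)
    (ε₀ : ℝ) (hε₀ : 0 < ε₀)
    (z₀ β : ℝ → ℝ)
    (hpos : ∀ α ∈ Set.Ioo 0 ε₀, 0 < z₀ α ∧ 0 < β α)
    (hE1 : ∀ α ∈ Set.Ioo 0 ε₀,
      z₀ α * ((intden ρ sc / intL) *
        ∑ t, nodefrac ρ sc t * deriv (AIcc rc sc a t) (z₀ α) / AIcc rc sc a t (z₀ α)) = β α)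
    (hβ0 : Filter.Tendsto β (nhdsWithin 0 (Set.Ioi 0)) (𝓝 0)) :
    Filter.Tendsto z₀ (nhdsWithin 0 (Set.Ioi 0)) (𝓝 0) ∧
    Filter.Tendsto (fun α => z₀ α ^ rmin * Cdef rc sc a ρ rmin / (β α * intL))
      (nhdsWithin 0 (Set.Ioi 0)) (𝓝 1) := by
  obtain ⟨t₀, ht₀⟩ := hrex
  have hr : ∀ t, 0 < rc t := fun t => by linarith [h2r t]
  have hsc : ∀ t, 0 < sc t := fun t => (hr t).trans_le (hrs t)
  have hden : intden ρ sc ≠ 0 :=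
    (sum_pos (fun t _ => div_pos (hρ t) (by exact_mod_cast hsc t)) univ_nonempty).ne'
  set H := weightedEulerQuot rc sc a ρ rmin
  have hIoo : ∀ᶠ α in 𝓝[>] 0, α ∈ Set.Ioo 0 ε₀ := Ioo_mem_nhdsGT hε₀
  have hβL : ∀ α ∈ Set.Ioo 0 ε₀, β α * intL = z₀ α ^ rmin * H (z₀ α) := fun α hα => by
    rw [← hE1 α hα, mul_intden_mul_sum_nodefrac rc sc a ρ hden,
      pow_mul_weightedEulerQuot rc sc a ρ rmin hrle, div_mul_cancel₀ _ hintL.ne']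
  have hz : Tendsto z₀ (𝓝[>] 0) (𝓝 0) := by
    refine tendsto_nhds_zero_of_sum_mul_deriv_div_AIcc_le rc sc a ρ hann har hr hrs hρ
      (hIoo.mono fun α hα => (hpos α hα).1.le) ?_ (by simpa using hβ0.mul_const intL)
    filter_upwards [hIoo] with α hα
    rw [hβL α hα, pow_mul_weightedEulerQuot rc sc a ρ rmin hrle]
  have hC : 0 < Cdef rc sc a ρ rmin :=
    Cdef_pos rc sc a ρ rmin hsc har hρ (ht₀ ▸ hr t₀) ⟨t₀, ht₀⟩
  have hHz : Tendsto (fun α => H (z₀ α)) (𝓝[>] 0) (𝓝 (Cdef rc sc a ρ rmin)) := by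
    rw [← weightedEulerQuot_zero rc sc a ρ rmin hr hrs hrle]
    exact (continuousAt_weightedEulerQuot rc sc a ρ rmin hr).tendsto.comp hz
  refine ⟨hz, ?_⟩
  have hlim := (tendsto_const_nhds (x := Cdef rc sc a ρ rmin)).div hHz hC.ne'
  rw [div_self hC.ne'] at hlim
  refine hlim.congr' ?_
  filter_upwards [hIoo] with α hα
  rw [hβL α hα, mul_div_mul_left _ _ (pow_ne_zero rmin (hpos α hα).1.ne')]
  rfl

/-- if positive functions `z₀, β` on `(0,ε₀)` satisfy
`z₀ (∫ρ/∫λ) ∑_t γ_t A_t′(z₀)/A_t(z₀) = β` and `β(α) → 0` as `α → 0⁺`, then `z₀(α) → 0`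
and `z₀(α)^r C/(β(α)∫λ) → 1` as `α → 0⁺`. -/
theorem stmt_16 {ι : Type*} [Fintype ι] [Nonempty ι]
    (rc sc : ι → ℕ) (h2r : ∀ t, 2 ≤ rc t) (hrs : ∀ t, rc t ≤ sc t)
    (a : ι → ℕ → ℝ) (hann : ∀ t u, 0 ≤ a t u) (har : ∀ t, 0 < a t (rc t))
    (ρ : ι → ℝ) (hρ : ∀ t, 0 < ρ t) (hρ1 : ∑ t, ρ t = 1)
    (intL : ℝ) (hintL : 0 < intL)
    (rmin : ℕ) (hrle : ∀ t, rmin ≤ rc t) (hrex : ∃ t, rc t = rmin)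
    (ε₀ : ℝ) (hε₀ : 0 < ε₀)
    (z₀ β : ℝ → ℝ)
    (hpos : ∀ α ∈ Set.Ioo 0 ε₀, 0 < z₀ α ∧ 0 < β α)
    (hE1 : ∀ α ∈ Set.Ioo 0 ε₀,
      z₀ α * ((intden ρ sc / intL) *
        ∑ t, nodefrac ρ sc t * deriv (AIcc rc sc a t) (z₀ α) / AIcc rc sc a t (z₀ α)) = β α)
    (hβ0 : Filter.Tendsto β (nhdsWithin 0 (Set.Ioi 0)) (𝓝 0)) :
    Filter.Tendsto z₀ (nhdsWithin 0 (Set.Ioi 0)) (𝓝 0) ∧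
    Filter.Tendsto (fun α => z₀ α ^ rmin * Cdef rc sc a ρ rmin / (β α * intL))
      (nhdsWithin 0 (Set.Ioi 0)) (𝓝 1) :=
  stmt_16_general rc sc h2r hrs a hann har ρ hρ intL hintL rmin hrle hrex ε₀ hε₀ z₀ β hpos hE1 hβ0
end

section
/- For every α ∈ (0,1), setting a = α−1, b = 15α−10, c = 15α−5, d = α, ρ = (3ac − b²)/(9a²) and μ = (9abc − 27a²d − 2b³)/(54a³), the discriminant satisfies Δ = ρ³ + μ² < 0. -/
/-! Cardano's quantities satisfy `ρ³ + μ² = -disc / (108 a⁴)` for every cubic with `a ≠ 0`, so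
`Δ < 0` is equivalent to the cubic discriminant being positive. For the cubic of the
(3,6)-regular ensemble the discriminant is `16 (108 t⁴ + 9 t² + 8)` with `t = 2α - 1`,
which is positive for every real `α`. -/

theorem Cubic.cardano_rho_cube_add_mu_sq {K : Type*} [Field K] [CharZero K] (P : Cubic K)
    (ha : P.a ≠ 0) :
    ((3 * P.a * P.c - P.b ^ 2) / (9 * P.a ^ 2)) ^ 3 +
        ((9 * P.a * P.b * P.c - 27 * P.a ^ 2 * P.d - 2 * P.b ^ 3) / (54 * P.a ^ 3)) ^ 2 =
      -P.discr / (108 * P.a ^ 4) := by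
  rw [Cubic.discr]
  field_simp
  ring

/-- The cubic in `x = z²` obtained from the saddle-point equation `f(z) = α`. -/
def ldpcSaddleCubic (α : ℝ) : Cubic ℝ := ⟨α - 1, 15 * α - 10, 15 * α - 5, α⟩

theorem ldpcSaddleCubic_discr (α : ℝ) :
    (ldpcSaddleCubic α).discr = 16 * (108 * (2 * α - 1) ^ 4 + 9 * (2 * α - 1) ^ 2 + 8) := by
  simp only [Cubic.discr, ldpcSaddleCubic]
  ring

theorem ldpcSaddleCubic_discr_pos (α : ℝ) : 0 < (ldpcSaddleCubic α).discr := by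
  rw [ldpcSaddleCubic_discr]
  positivity

/-- for every `α ∈ (0,1)`, with `a = α−1`, `b = 15α−10`, `c = 15α−5`, `d = α`,
`ρ = (3ac − b²)/(9a²)` and `μ = (9abc − 27a²d − 2b³)/(54a³)`, the discriminant of the cubic
arising from the saddle-point equation of the (3,6)-regular LDPC ensemble satisfies
`Δ = ρ³ + μ² < 0`. -/
theorem stmt_19 :
    ∀ α ∈ Set.Ioo (0 : ℝ) 1,
      let a : ℝ := α - 1
      let b : ℝ := 15 * α - 10
      let c : ℝ := 15 * α - 5
      let d : ℝ := α
      let ρ : ℝ := (3 * a * c - b ^ 2) / (9 * a ^ 2)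
      let μ : ℝ := (9 * a * b * c - 27 * a ^ 2 * d - 2 * b ^ 3) / (54 * a ^ 3)
      ρ ^ 3 + μ ^ 2 < 0 := by
  intro α hα
  have ha : (ldpcSaddleCubic α).a ≠ 0 := sub_ne_zero.mpr hα.2.ne
  have hΔ := (ldpcSaddleCubic α).cardano_rho_cube_add_mu_sq ha
  simp only [ldpcSaddleCubic] at ha hΔ ⊢
  rw [hΔ, neg_div, neg_lt_zero]
  exact div_pos (ldpcSaddleCubic_discr_pos α) (by positivity)
end
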